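/- arXiv:1710.05165 — 10 statements merged into one kernel-verified Lean document; each statement's English description precedes it below -/
import Mathlib

section
/- For a uniformly random permutation of {1,...,n} and any two distinct positive integers k₁ < k₂ ≤ n, the probability that the permutation has both a cycle of length k₁ and a cycle of length k₂ is at most 1/(k₁·k₂). -/
/-!
Call a *marking* of a permutation `σ` an embedding `e : Fin k₁ ⊕ Fin k₂ ↪ α` with
`σ ∘ e = e ∘ (finRotate k₁ ⊕ finRotate k₂)`: it traces a `k₁`-cycle and a `k₂`-cycle of `σ`
from chosen starting points. A permutation with cycles of both lengths has at least `k₁ * k₂`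
markings, one for each choice of the two starting points. Conversely, a marked permutation is
determined by its marking together with its restriction to the unmarked points, so there are at
most `n.descFactorial (k₁ + k₂) * (n - (k₁ + k₂))! ≤ n!` marked permutations of `n` points.
-/

open Function Equiv Set
open scoped Nat

namespace Function

variable {α : Type*} {f : α → α} {x y : α} {k k₁ k₂ : ℕ}

theorem IsPeriodicPt.semiconj_iterate_finRotate (h : IsPeriodicPt f k x) :
    Semiconj (fun t : Fin k => f^[t] x) (finRotate k) f := by
  intro t
  have := t.neZero
  rw [finRotate_apply]
  show f^[((t + 1 : Fin k) : ℕ)] x = f (f^[t] x)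
  rw [Fin.val_add, Fin.val_one', Nat.add_mod_mod, h.iterate_mod_apply,
    iterate_succ_apply']

theorem injective_iterate_fin (h : minimalPeriod f x = k) :
    Injective (fun t : Fin k => f^[t] x) := fun s t hst =>
  Fin.ext (iterate_injOn_Iio_minimalPeriod (h ▸ s.2 : (s : ℕ) < _) (h ▸ t.2 : (t : ℕ) < _) hst)

theorem iterate_ne_iterate_of_minimalPeriod_ne (hx : x ∈ periodicPts f)
    (hy : y ∈ periodicPts f) (h : minimalPeriod f x ≠ minimalPeriod f y) (a b : ℕ) :
    f^[a] x ≠ f^[b] y := fun hab =>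
  h <| by rw [← minimalPeriod_apply_iterate hx a, hab, minimalPeriod_apply_iterate hy b]

theorem semiconj_sumElim_iterate (hx : IsPeriodicPt f k₁ x) (hy : IsPeriodicPt f k₂ y) :
    Semiconj (Sum.elim (fun t : Fin k₁ => f^[t] x) (fun t : Fin k₂ => f^[t] y))
      (sumCongr (finRotate k₁) (finRotate k₂)) f := by
  rintro (t | t)
  · exact hx.semiconj_iterate_finRotate t
  · exact hy.semiconj_iterate_finRotate t

theorem injective_sumElim_iterate (hx : minimalPeriod f x = k₁) (hy : minimalPeriod f y = k₂)
    (hk₁ : 0 < k₁) (hk₂ : 0 < k₂) (hne : k₁ ≠ k₂) :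
    Injective (Sum.elim (fun t : Fin k₁ => f^[t] x) (fun t : Fin k₂ => f^[t] y)) := by
  subst hx hy
  exact (injective_iterate_fin rfl).sumElim (injective_iterate_fin rfl)
    fun a b => iterate_ne_iterate_of_minimalPeriod_ne
      (minimalPeriod_pos_iff_mem_periodicPts.1 hk₁) (minimalPeriod_pos_iff_mem_periodicPts.1 hk₂)
      hne a b

theorem mul_le_card_semiconj_embedding [Finite α] (hx : minimalPeriod f x = k₁)
    (hy : minimalPeriod f y = k₂) (hk₁ : 0 < k₁) (hk₂ : 0 < k₂) (hne : k₁ ≠ k₂) :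
    k₁ * k₂ ≤ Nat.card {e : Fin k₁ ⊕ Fin k₂ ↪ α //
      Semiconj e (sumCongr (finRotate k₁) (finRotate k₂)) f} := by
  have hxi (i : ℕ) : minimalPeriod f (f^[i] x) = k₁ :=
    hx ▸ minimalPeriod_apply_iterate (minimalPeriod_pos_iff_mem_periodicPts.1 (hx ▸ hk₁)) i
  have hyj (j : ℕ) : minimalPeriod f (f^[j] y) = k₂ :=
    hy ▸ minimalPeriod_apply_iterate (minimalPeriod_pos_iff_mem_periodicPts.1 (hy ▸ hk₂)) j
  let mark (ij : Fin k₁ × Fin k₂) : {e : Fin k₁ ⊕ Fin k₂ ↪ α //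
      Semiconj e (sumCongr (finRotate k₁) (finRotate k₂)) f} :=
    ⟨⟨_, injective_sumElim_iterate (hxi ij.1) (hyj ij.2) hk₁ hk₂ hne⟩,
      semiconj_sumElim_iterate ((hx ▸ isPeriodicPt_minimalPeriod f x).apply_iterate _)
        ((hy ▸ isPeriodicPt_minimalPeriod f y).apply_iterate _)⟩
  have hmark : Injective mark := by
    rintro ⟨i, j⟩ ⟨i', j'⟩ h
    have hi : f^[i] x = f^[i'] x := congrArg (fun e => e.1 (Sum.inl ⟨0, hk₁⟩)) h
    have hj : f^[j] y = f^[j'] y := congrArg (fun e => e.1 (Sum.inr ⟨0, hk₂⟩)) h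
    rw [injective_iterate_fin hx hi, injective_iterate_fin hy hj]
  simpa using Nat.card_le_card_of_injective mark hmark

end Function

variable {α ι : Type*}

theorem Function.Semiconj.apply_mem_range_iff {e : ι → α} {π : Perm ι} {σ : Perm α}
    (h : Semiconj e π σ) (z : α) : σ z ∈ range e ↔ z ∈ range e := by
  constructor
  · rintro ⟨i, hi⟩
    refine ⟨π.symm i, σ.injective ?_⟩
    rw [← h, π.apply_symm_apply, hi]
  · rintro ⟨i, rfl⟩
    exact ⟨π i, h i⟩

theorem card_sigma_embedding_perm_compl_range_le [Finite α] [Finite ι] :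
    Nat.card (Σ e : ι ↪ α, Perm {z // z ∉ range e}) ≤ (Nat.card α)! := by
  classical
  have := Fintype.ofFinite α
  have := Fintype.ofFinite ι
  have hperm (e : ι ↪ α) :
      Nat.card (Perm {z // z ∉ range e}) = (Fintype.card α - Fintype.card ι)! := by
    rw [Nat.card_perm, Nat.card_eq_fintype_card, Fintype.card_subtype_compl, Fintype.card_range]
  rw [Nat.card_sigma, Finset.sum_congr rfl fun e _ => hperm e, Finset.sum_const, smul_eq_mul,
    Finset.card_univ, Fintype.card_embedding_eq, Nat.card_eq_fintype_card]
  rcases le_or_gt (Fintype.card ι) (Fintype.card α) with hle | hlt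
  · rw [mul_comm, Nat.factorial_mul_descFactorial hle]
  · rw [Nat.descFactorial_eq_zero_iff_lt.2 hlt, zero_mul]
    exact Nat.zero_le _

theorem card_sigma_semiconj_embedding_le [Finite α] [Finite ι] (π : Perm ι) :
    Nat.card (Σ σ : Perm α, {e : ι ↪ α // Semiconj e π σ}) ≤ (Nat.card α)! := by
  let F (p : Σ σ : Perm α, {e : ι ↪ α // Semiconj e π σ}) :
      Σ e : ι ↪ α, Perm {z // z ∉ range e} :=
    ⟨p.2.1, p.1.subtypePerm fun z => (p.2.2.apply_mem_range_iff z).not⟩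
  have hF : Injective F := by
    rintro ⟨σ, e, he⟩ ⟨σ', e', he'⟩ h
    obtain rfl : e = e' := congrArg Sigma.fst h
    have hperm := sigma_mk_injective h
    obtain rfl : σ = σ' := by
      ext z
      by_cases hz : z ∈ range e
      · obtain ⟨i, rfl⟩ := hz
        rw [← he, ← he']
      · simpa using congrArg Subtype.val (DFunLike.congr_fun hperm ⟨z, hz⟩)
    rfl
  exact (Nat.card_le_card_of_injective F hF).trans card_sigma_embedding_perm_compl_range_le

theorem card_perm_exists_minimalPeriod_eq_and_mul_le [Finite α] {k₁ k₂ : ℕ} (hk₁ : 0 < k₁)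
    (hk₂ : 0 < k₂) (hne : k₁ ≠ k₂) :
    Nat.card {σ : Perm α // (∃ x, minimalPeriod σ x = k₁) ∧ (∃ y, minimalPeriod σ y = k₂)} *
      (k₁ * k₂) ≤ (Nat.card α)! := by
  classical
  have := Fintype.ofFinite α
  let hasBoth (σ : Perm α) := (∃ x, minimalPeriod σ x = k₁) ∧ (∃ y, minimalPeriod σ y = k₂)
  let marks (σ : Perm α) := Nat.card {e : Fin k₁ ⊕ Fin k₂ ↪ α //
    Semiconj e (sumCongr (finRotate k₁) (finRotate k₂)) σ}
  calc Nat.card {σ // hasBoth σ} * (k₁ * k₂) = ∑ σ ∈ Finset.univ.filter hasBoth, k₁ * k₂ := by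
        rw [Finset.sum_const, smul_eq_mul, Nat.card_eq_fintype_card, Fintype.card_subtype]
    _ ≤ ∑ σ ∈ Finset.univ.filter hasBoth, marks σ := Finset.sum_le_sum fun σ hσ => by
        obtain ⟨⟨x, hx⟩, ⟨y, hy⟩⟩ := (Finset.mem_filter.1 hσ).2
        exact mul_le_card_semiconj_embedding hx hy hk₁ hk₂ hne
    _ ≤ ∑ σ, marks σ := Finset.sum_le_sum_of_subset (Finset.filter_subset _ _)
    _ = Nat.card (Σ σ : Perm α, {e : Fin k₁ ⊕ Fin k₂ ↪ α //
          Semiconj e (sumCongr (finRotate k₁) (finRotate k₂)) σ}) := Nat.card_sigma.symm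
    _ ≤ (Nat.card α)! := card_sigma_semiconj_embedding_le _

theorem stmt0_general (n k₁ k₂ : ℕ) (hk₁ : 0 < k₁) (hlt : k₁ < k₂) :
    (Nat.card {σ : Equiv.Perm (Fin n) //
        (∃ x, Function.minimalPeriod σ x = k₁) ∧ (∃ x, Function.minimalPeriod σ x = k₂)} : ℝ)
      / (Nat.card (Equiv.Perm (Fin n))) ≤ 1 / (k₁ * k₂) := by
  have hk₂ : 0 < k₂ := hk₁.trans hlt
  have key := card_perm_exists_minimalPeriod_eq_and_mul_le (α := Fin n) hk₁ hk₂ hlt.ne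
  rw [Nat.card_perm, div_le_div_iff₀ (by positivity) (by positivity), one_mul]
  exact_mod_cast key

/-- For a uniformly random permutation of `{1,...,n}` and distinct `k₁ < k₂ ≤ n`, the
probability that the permutation has both a cycle of length `k₁` and a cycle of length `k₂`
is at most `1/(k₁·k₂)`.  A cycle of length `k` means a point whose orbit under the
permutation has size `k` (i.e. whose minimal period is `k`). -/
theorem stmt0 (n k₁ k₂ : ℕ) (hk₁ : 0 < k₁) (hlt : k₁ < k₂) (hk₂ : k₂ ≤ n) :
    (Nat.card {σ : Equiv.Perm (Fin n) //
        (∃ x, Function.minimalPeriod σ x = k₁) ∧ (∃ x, Function.minimalPeriod σ x = k₂)} : ℝ)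
      / (Nat.card (Equiv.Perm (Fin n))) ≤ 1 / (k₁ * k₂) :=
  stmt0_general n k₁ k₂ hk₁ hlt
end

section
/- For each positive integer l ≤ n, the probability that a uniformly random permutation of {1,...,n} has at least two distinct cycles whose lengths are both divisible by l is at most C(log n)²/l² for some absolute constant C. -/
/-!
Call `(σ, x, y)` a `(j, k)`-triple if `x` and `y` lie in distinct cycles of `σ`, of lengths `j`
and `k`. Multiplying `σ` by the transposition `(x y)` merges the two cycles into one cycle of
length `j + k` through `x`, in which `y` is the `k`-th iterate of `x`; so `(σ, x, y) ↦
(x, σ * (x y))` is injective on `(j, k)`-triples. For a fixed point `x`, at most `(n - 1)!`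
permutations put `x` in a cycle of a given length (remove `x` from its cycle and induct), so for
each `(j, k)` there are at most `n!` triples.

Weighting the `(j, k)`-triples of `σ` by `1 / (j k)` counts the ordered pairs of distinct cycles
of `σ`, which is at least `1` when `σ` has two distinct cycles with lengths in `D`. Summing over
`σ`, at most `n! (∑_{j ∈ D} 1/j)²` permutations have two such cycles. For the multiples of `l` up
to `n` the sum is `harmonic (n / l) / l ≤ (1 + log n) / l`.
-/

open Equiv Equiv.Perm Function Finset
open scoped Nat

theorem Nat.card_subtype_prod_le_factorial {α γ : Type*} [Fintype α] [Finite γ]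
    (Q : α → γ → Prop) (h : ∀ a, Nat.card {c // Q a c} ≤ (Fintype.card α - 1)!) :
    Nat.card {s : α × γ // Q s.1 s.2} ≤ (Fintype.card α)! := by
  rw [Nat.card_congr (subtypeProdEquivSigmaSubtype Q), Nat.card_sigma]
  refine (sum_le_sum fun a _ => h a).trans ?_
  rw [sum_const, Finset.card_univ, smul_eq_mul]
  rcases eq_or_ne (Fintype.card α) 0 with h0 | h0
  · simp [h0]
  · exact (Nat.mul_factorial_pred h0).le

theorem Function.Semiconj.minimalPeriod_eq {α β : Type*} {e : α → β} {f : α → α} {g : β → β}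
    (h : Semiconj e f g) (he : Injective e) (x : α) :
    minimalPeriod g (e x) = minimalPeriod f x :=
  minimalPeriod_eq_minimalPeriod_iff.2 fun n => by
    simp only [IsPeriodicPt, IsFixedPt, ← (h.iterate_right n) x, he.eq_iff]

namespace Equiv.Perm

variable {α : Type*}

theorem minimalPeriod_pos [Finite α] (σ : Perm α) (x : α) : 0 < minimalPeriod σ x :=
  minimalPeriod_pos_of_mem_periodicPts (σ.injective.mem_periodicPts x)

theorem iterate_ne_of_not_sameCycle {σ : Perm α} {x y : α} (h : ¬σ.SameCycle x y) (i : ℕ) :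
    σ^[i] y ≠ x := fun hi =>
  h (sameCycle_pow_right.1 (by rw [← iterate_eq_pow, hi]))

theorem iterate_ne_self_of_lt_minimalPeriod {σ : Perm α} {x : α} {i : ℕ} (hi : 0 < i)
    (hix : i < minimalPeriod σ x) : σ^[i] x ≠ x := fun h =>
  hi.ne' (IsPeriodicPt.eq_zero_of_lt_minimalPeriod h hix)

def InDistinctCycles (σ : Perm α) (j k : ℕ) (x y : α) : Prop :=
  ¬σ.SameCycle x y ∧ minimalPeriod σ x = j ∧ minimalPeriod σ y = k

theorem mul_le_card_inDistinctCycles [Finite α] {σ : Perm α} {x y : α} (h : ¬σ.SameCycle x y) :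
    minimalPeriod σ x * minimalPeriod σ y ≤
      Nat.card {p : α × α //
        σ.InDistinctCycles (minimalPeriod σ x) (minimalPeriod σ y) p.1 p.2} := by
  have hper : ∀ z, z ∈ periodicPts σ := σ.injective.mem_periodicPts
  let orbitPair : Fin (minimalPeriod σ x) × Fin (minimalPeriod σ y) →
      {p : α × α // σ.InDistinctCycles (minimalPeriod σ x) (minimalPeriod σ y) p.1 p.2} :=
    fun ab => ⟨(σ^[ab.1] x, σ^[ab.2] y),
      by simpa only [iterate_eq_pow, sameCycle_pow_left, sameCycle_pow_right] using h,
      minimalPeriod_apply_iterate (hper x) _, minimalPeriod_apply_iterate (hper y) _⟩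
  have hinj : Injective orbitPair := by
    rintro ⟨a, b⟩ ⟨a', b'⟩ he
    obtain ⟨ha, hb⟩ := Prod.ext_iff.1 (Subtype.ext_iff.1 he)
    exact Prod.ext (Fin.ext (iterate_injOn_Iio_minimalPeriod a.2 a'.2 ha))
      (Fin.ext (iterate_injOn_Iio_minimalPeriod b.2 b'.2 hb))
  simpa using Nat.card_le_card_of_injective orbitPair hinj

variable [DecidableEq α]

theorem iterate_mul_swap_apply_of_not_sameCycle {σ : Perm α} {x y : α}
    (h : ¬σ.SameCycle x y) {i : ℕ} (hi : 0 < i) (hik : i ≤ minimalPeriod σ y) :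
    (σ * swap x y)^[i] x = σ^[i] y := by
  induction i with
  | zero => omega
  | succ i ih =>
    rcases Nat.eq_zero_or_pos i with rfl | hi'
    · simp
    rw [iterate_succ_apply', ih hi' (by omega), iterate_succ_apply', mul_apply,
      swap_apply_of_ne_of_ne (iterate_ne_of_not_sameCycle h i)
        (iterate_ne_self_of_lt_minimalPeriod hi' (by omega))]

theorem iterate_minimalPeriod_mul_swap_apply [Finite α] {σ : Perm α} {x y : α}
    (h : ¬σ.SameCycle x y) : (σ * swap x y)^[minimalPeriod σ y] x = y :=
  (iterate_mul_swap_apply_of_not_sameCycle h (σ.minimalPeriod_pos y) le_rfl).trans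
    iterate_minimalPeriod

theorem minimalPeriod_mul_swap_of_not_sameCycle [Finite α] {σ : Perm α} {x y : α}
    (h : ¬σ.SameCycle x y) :
    minimalPeriod (σ * swap x y) x = minimalPeriod σ x + minimalPeriod σ y := by
  set τ := σ * swap x y
  set j := minimalPeriod σ x
  set k := minimalPeriod σ y
  have hj : 0 < j := σ.minimalPeriod_pos x
  have hx : ∀ i, 0 < i → i ≤ k → τ^[i] x = σ^[i] y := fun i hi hik =>
    iterate_mul_swap_apply_of_not_sameCycle h hi hik
  have hy : ∀ i, 0 < i → i ≤ j → τ^[k + i] x = σ^[i] x := fun i hi hij => by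
    rw [add_comm, iterate_add_apply, iterate_minimalPeriod_mul_swap_apply h]
    simpa only [τ, swap_comm] using
      iterate_mul_swap_apply_of_not_sameCycle (fun h' => h h'.symm) hi hij
  refine le_antisymm (IsPeriodicPt.minimalPeriod_le (by omega) ?_) ?_
  · rw [IsPeriodicPt, IsFixedPt, add_comm, hy j hj le_rfl, iterate_minimalPeriod]
  · by_contra! hlt
    have hp := τ.minimalPeriod_pos x
    have hper : τ^[minimalPeriod τ x] x = x := iterate_minimalPeriod
    rcases le_or_gt (minimalPeriod τ x) k with hle | hgt
    · exact iterate_ne_of_not_sameCycle h _ ((hx _ hp hle).symm.trans hper)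
    · obtain ⟨i, hi⟩ : ∃ i, minimalPeriod τ x = k + i := ⟨_, (Nat.add_sub_of_le hgt.le).symm⟩
      rw [hi, hy i (by omega) (by omega)] at hper
      exact iterate_ne_self_of_lt_minimalPeriod (by omega) (by omega) hper

theorem eq_of_mul_swap_eq_mul_swap [Finite α] {σ σ' : Perm α} {x y y' : α}
    (h : ¬σ.SameCycle x y) (h' : ¬σ'.SameCycle x y')
    (hk : minimalPeriod σ y = minimalPeriod σ' y') (he : σ * swap x y = σ' * swap x y') :
    σ = σ' ∧ y = y' := by
  obtain rfl : y = y' := by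
    rw [← iterate_minimalPeriod_mul_swap_apply h, he, hk,
      iterate_minimalPeriod_mul_swap_apply h']
  exact ⟨mul_right_cancel he, rfl⟩

theorem exists_ofSubtype_eq_of_apply_eq_self {σ : Perm α} {x : α} (h : σ x = x) :
    ∃ π : Perm {z // z ≠ x}, ofSubtype π = σ :=
  ⟨σ.subtypePerm fun _ => not_congr (σ.injective.eq_iff' h),
    ofSubtype_subtypePerm _ fun _ hz hzx => hz (hzx ▸ h)⟩

theorem ofSubtype_apply_self {x : α} (π : Perm {z // z ≠ x}) : ofSubtype π x = x :=
  ofSubtype_apply_of_not_mem π (not_not.2 rfl)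

theorem minimalPeriod_ofSubtype_mul_swap [Finite α] {x : α} (π : Perm {z // z ≠ x})
    (y : {z // z ≠ x}) :
    minimalPeriod (ofSubtype π * swap x y) x = minimalPeriod π y + 1 := by
  have hsemi : Semiconj Subtype.val π (ofSubtype π) := fun z => (ofSubtype_apply_coe π z).symm
  rw [minimalPeriod_mul_swap_of_not_sameCycle
      fun h => y.2 (h.eq_of_left (ofSubtype_apply_self π)).symm,
    minimalPeriod_eq_one_iff_isFixedPt.2 (ofSubtype_apply_self π),
    hsemi.minimalPeriod_eq Subtype.val_injective, add_comm]

theorem card_minimalPeriod_eq_one_le [Finite α] (x : α) :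
    Nat.card {τ : Perm α // minimalPeriod τ x = 1} ≤ Nat.card (Perm {z // z ≠ x}) :=
  Nat.card_le_card_of_surjective
    (fun π => ⟨ofSubtype π, minimalPeriod_eq_one_iff_isFixedPt.2 (ofSubtype_apply_self π)⟩)
    fun τ => by
      obtain ⟨π, hπ⟩ := exists_ofSubtype_eq_of_apply_eq_self
        (minimalPeriod_eq_one_iff_isFixedPt.1 τ.2)
      exact ⟨π, Subtype.ext hπ⟩

theorem card_minimalPeriod_eq_add_two_le [Finite α] (x : α) (m : ℕ) :
    Nat.card {τ : Perm α // minimalPeriod τ x = m + 2} ≤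
      Nat.card {q : {z // z ≠ x} × Perm {z // z ≠ x} // minimalPeriod q.2 q.1 = m + 1} := by
  refine Nat.card_le_card_of_surjective
    (fun q => ⟨ofSubtype q.1.2 * swap x q.1.1, by rw [minimalPeriod_ofSubtype_mul_swap, q.2]⟩)
    fun ⟨τ, hτx⟩ => ?_
  have hy : τ⁻¹ x ≠ x := fun h => by
    rw [minimalPeriod_eq_one_iff_isFixedPt.2 (inv_eq_iff_eq.1 h).symm] at hτx
    omega
  obtain ⟨π, hπ⟩ := exists_ofSubtype_eq_of_apply_eq_self (x := x)
    (σ := τ * swap x (τ⁻¹ x)) (by simp [mul_apply])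
  have hτ : ofSubtype π * swap x (τ⁻¹ x) = τ := by rw [hπ, mul_swap_mul_self]
  have hper := minimalPeriod_ofSubtype_mul_swap π ⟨_, hy⟩
  rw [hτ, hτx] at hper
  exact ⟨⟨(⟨_, hy⟩, π), show minimalPeriod π ⟨_, hy⟩ = m + 1 by omega⟩, Subtype.ext hτ⟩

theorem card_minimalPeriod_eq_le [Fintype α] (x : α) (m : ℕ) :
    Nat.card {τ : Perm α // minimalPeriod τ x = m} ≤ (Fintype.card α - 1)! := by
  induction m generalizing α with
  | zero =>
    have : IsEmpty {τ : Perm α // minimalPeriod τ x = 0} :=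
      ⟨fun τ => (τ.1.minimalPeriod_pos x).ne' τ.2⟩
    simp
  | succ m ih =>
    have hcard : Fintype.card {z // z ≠ x} = Fintype.card α - 1 := by
      simp only [ne_eq, Fintype.card_subtype_compl, Fintype.card_unique]
    rw [← hcard]
    rcases m with _ | m
    · rw [← Fintype.card_perm, ← Nat.card_eq_fintype_card]
      exact card_minimalPeriod_eq_one_le x
    · exact (card_minimalPeriod_eq_add_two_le x m).trans
        (Nat.card_subtype_prod_le_factorial _ fun y => ih y)

theorem sum_card_inDistinctCycles_le [Fintype α] (j k : ℕ) :
    ∑ σ : Perm α, Nat.card {p : α × α // σ.InDistinctCycles j k p.1 p.2} ≤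
      (Fintype.card α)! := by
  rw [← Nat.card_sigma, ← Nat.card_congr (subtypeProdEquivSigmaSubtype _)]
  refine (Nat.card_le_card_of_injective
    (fun s => (⟨(s.1.2.1, s.1.1 * swap s.1.2.1 s.1.2.2), by
      obtain ⟨h, hj, hk⟩ := s.2
      rw [minimalPeriod_mul_swap_of_not_sameCycle h, hj, hk]⟩ :
      {q : α × Perm α // minimalPeriod q.2 q.1 = j + k})) ?_).trans
    (Nat.card_subtype_prod_le_factorial _ fun x => card_minimalPeriod_eq_le x _)
  intro ⟨⟨σ, x, y⟩, h, _, hk⟩ ⟨⟨σ', x', y'⟩, h', _, hk'⟩ he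
  obtain ⟨rfl, hmul⟩ := Prod.ext_iff.1 (Subtype.ext_iff.1 he)
  obtain ⟨rfl, rfl⟩ := eq_of_mul_swap_eq_mul_swap h h' (hk.trans hk'.symm) hmul
  rfl

end Equiv.Perm

section CyclePairs

variable {α : Type*}

/-- Each ordered pair of distinct cycles of `σ` with lengths `j, k ∈ D` contributes `j * k` pairs
of points, so this counts such pairs of cycles. -/
noncomputable def cyclePairWeight (D : Finset ℕ) (σ : Perm α) : ℝ :=
  ∑ j ∈ D, ∑ k ∈ D,
    (Nat.card {p : α × α // σ.InDistinctCycles j k p.1 p.2} : ℝ) * ((j : ℝ)⁻¹ * (k : ℝ)⁻¹)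

theorem cyclePairWeight_nonneg (D : Finset ℕ) (σ : Perm α) : 0 ≤ cyclePairWeight D σ := by
  unfold cyclePairWeight
  positivity

theorem one_le_cyclePairWeight [Finite α] {D : Finset ℕ} {σ : Perm α} {x y : α}
    (h : ¬σ.SameCycle x y) (hx : minimalPeriod σ x ∈ D) (hy : minimalPeriod σ y ∈ D) : 1 ≤ cyclePairWeight D σ := by
  set N : ℕ → ℕ → ℕ := fun j k => Nat.card {p : α × α // σ.InDistinctCycles j k p.1 p.2}
  have hj : (0 : ℝ) < minimalPeriod σ x := by exact_mod_cast σ.minimalPeriod_pos x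
  have hk : (0 : ℝ) < minimalPeriod σ y := by exact_mod_cast σ.minimalPeriod_pos y
  calc (1 : ℝ) ≤ (N (minimalPeriod σ x) (minimalPeriod σ y) : ℝ) *
        ((minimalPeriod σ x : ℝ)⁻¹ * (minimalPeriod σ y : ℝ)⁻¹) := by
        rw [← mul_inv, le_mul_inv_iff₀ (by positivity), one_mul]
        exact_mod_cast mul_le_card_inDistinctCycles h
    _ ≤ ∑ k ∈ D, (N (minimalPeriod σ x) k : ℝ) * ((minimalPeriod σ x : ℝ)⁻¹ * (k : ℝ)⁻¹) :=
      single_le_sum (f := fun k => (N (minimalPeriod σ x) k : ℝ) *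
        ((minimalPeriod σ x : ℝ)⁻¹ * (k : ℝ)⁻¹)) (fun _ _ => by positivity) hy
    _ ≤ cyclePairWeight D σ :=
      single_le_sum (f := fun j => ∑ k ∈ D, (N j k : ℝ) * ((j : ℝ)⁻¹ * (k : ℝ)⁻¹))
        (fun _ _ => by positivity) hx

theorem sum_cyclePairWeight_le [Fintype α] [DecidableEq α] (D : Finset ℕ) :
    ∑ σ : Perm α, cyclePairWeight D σ ≤ (Fintype.card α)! * (∑ j ∈ D, (j : ℝ)⁻¹) ^ 2 := by
  calc ∑ σ : Perm α, cyclePairWeight D σ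
      = ∑ j ∈ D, ∑ k ∈ D, ((∑ σ : Perm α,
          Nat.card {p : α × α // σ.InDistinctCycles j k p.1 p.2} : ℕ) : ℝ) *
            ((j : ℝ)⁻¹ * (k : ℝ)⁻¹) := by
        unfold cyclePairWeight
        rw [sum_comm]
        refine sum_congr rfl fun j _ => ?_
        rw [sum_comm]
        refine sum_congr rfl fun k _ => ?_
        rw [← sum_mul, Nat.cast_sum]
    _ ≤ ∑ j ∈ D, ∑ k ∈ D, ((Fintype.card α)! : ℝ) * ((j : ℝ)⁻¹ * (k : ℝ)⁻¹) := by
        gcongr with j _ k _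
        exact_mod_cast sum_card_inDistinctCycles_le j k
    _ = _ := by
        rw [sq, sum_mul_sum, mul_sum]
        simp_rw [mul_sum]

theorem card_perm_two_distinct_cycles_le [Fintype α] [DecidableEq α] (P : ℕ → Prop)
    [DecidablePred P] :
    (Nat.card {σ : Perm α // ∃ x y, ¬σ.SameCycle x y ∧
        P (minimalPeriod σ x) ∧ P (minimalPeriod σ y)} : ℝ) ≤
      (Fintype.card α)! * (∑ j ∈ Icc 1 (Fintype.card α) with P j, (j : ℝ)⁻¹) ^ 2 := by
  set D := {j ∈ Icc 1 (Fintype.card α) | P j}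
  have hmem : ∀ (σ : Perm α) x, P (minimalPeriod σ x) → minimalPeriod σ x ∈ D := fun σ x hP =>
    mem_filter.2 ⟨mem_Icc.2 ⟨σ.minimalPeriod_pos x, minimalPeriod_le_card⟩, hP⟩
  rw [Nat.card_eq_fintype_card, Fintype.card_subtype]
  calc _ ≤ ∑ σ ∈ univ.filter fun σ : Perm α => ∃ x y, ¬σ.SameCycle x y ∧
          P (minimalPeriod σ x) ∧ P (minimalPeriod σ y), cyclePairWeight D σ := by
        simpa using card_nsmul_le_sum _ (cyclePairWeight D) 1 fun σ hσ => by
          obtain ⟨x, y, h, hx, hy⟩ := (mem_filter.1 hσ).2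
          exact one_le_cyclePairWeight h (hmem σ x hx) (hmem σ y hy)
    _ ≤ ∑ σ : Perm α, cyclePairWeight D σ :=
        sum_le_sum_of_subset_of_nonneg (filter_subset _ _) fun σ _ _ =>
          cyclePairWeight_nonneg D σ
    _ ≤ _ := sum_cyclePairWeight_le D

end CyclePairs

theorem sum_inv_filter_dvd_le (n l : ℕ) (hl : 0 < l) :
    ∑ j ∈ Icc 1 n with l ∣ j, (j : ℝ)⁻¹ ≤ (1 + Real.log n) / l := by
  have hmultiples : {j ∈ Icc 1 n | l ∣ j} =
      (Icc 1 (n / l)).map ⟨(l * ·), mul_right_injective₀ hl.ne'⟩ := by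
    ext j
    simp only [mem_filter, mem_Icc, mem_map, Function.Embedding.coeFn_mk]
    constructor
    · rintro ⟨⟨hj1, hjn⟩, d, rfl⟩
      exact ⟨d, ⟨Nat.pos_of_mul_pos_left hj1, (Nat.le_div_iff_mul_le hl).2 (by linarith)⟩, rfl⟩
    · rintro ⟨d, ⟨hd1, hdn⟩, rfl⟩
      exact ⟨⟨Nat.mul_pos hl hd1, by rw [mul_comm]; exact (Nat.le_div_iff_mul_le hl).1 hdn⟩,
        dvd_mul_right _ _⟩
  have hlog : Real.log (n / l : ℕ) ≤ Real.log n := by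
    rcases Nat.eq_zero_or_pos (n / l) with h0 | hpos
    · rw [h0, Nat.cast_zero, Real.log_zero]
      exact Real.log_natCast_nonneg n
    · exact Real.log_le_log (by exact_mod_cast hpos) (by exact_mod_cast Nat.div_le_self n l)
  calc ∑ j ∈ Icc 1 n with l ∣ j, (j : ℝ)⁻¹ = (l : ℝ)⁻¹ * harmonic (n / l) := by
        simp [hmultiples, harmonic_eq_sum_Icc, mul_sum, mul_comm]
    _ ≤ (l : ℝ)⁻¹ * (1 + Real.log n) := by
        gcongr
        exact (harmonic_le_one_add_log _).trans (by linarith)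
    _ = (1 + Real.log n) / l := by ring

theorem one_add_log_le_mul_log {x : ℝ} (hx : 2 ≤ x) :
    1 + Real.log x ≤ (1 + (Real.log 2)⁻¹) * Real.log x := by
  have hlog2 : 0 < Real.log 2 := Real.log_pos one_lt_two
  have hle : Real.log 2 ≤ Real.log x := Real.log_le_log two_pos hx
  rw [add_mul, one_mul, inv_mul_eq_div, add_comm]
  linarith [(one_le_div hlog2).2 hle]

/-- There is an absolute constant `C` such that for every `n` and every positive `l ≤ n`,
the probability that a uniformly random permutation of `{1,...,n}` has at least two
distinct cycles whose lengths are both divisible by `l` is at most `C·(log n)²/l²`.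
Two distinct cycles are witnessed by two points lying in different cycles. -/
theorem stmt2 :
    ∃ C : ℝ, 0 < C ∧ ∀ n l : ℕ, 1 ≤ l → l ≤ n →
      (Nat.card {σ : Equiv.Perm (Fin n) //
          ∃ x y : Fin n, ¬ σ.SameCycle x y ∧
            l ∣ Function.minimalPeriod σ x ∧ l ∣ Function.minimalPeriod σ y} : ℝ)
        / (Nat.card (Equiv.Perm (Fin n)))
        ≤ C * (Real.log n) ^ 2 / l ^ 2 := by
  refine ⟨(1 + (Real.log 2)⁻¹) ^ 2, by positivity, fun n l hl hln => ?_⟩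
  obtain rfl | hn : n = 1 ∨ 2 ≤ n := by omega
  · simp [SameCycle.refl]
  rw [Nat.card_perm, Nat.card_fin, div_le_iff₀ (by positivity)]
  calc _ ≤ (n ! : ℝ) * (∑ j ∈ Icc 1 n with l ∣ j, (j : ℝ)⁻¹) ^ 2 := by
        simpa using card_perm_two_distinct_cycles_le (α := Fin n) (l ∣ ·)
    _ ≤ n ! * ((1 + Real.log n) / l) ^ 2 := by
        gcongr
        exact sum_inv_filter_dvd_le n l hl
    _ ≤ n ! * ((1 + (Real.log 2)⁻¹) * Real.log n / l) ^ 2 := by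
        gcongr
        exact one_add_log_le_mul_log (by exact_mod_cast hn)
    _ = _ := by ring
end

section
/- For every finite field 𝔽_q and every n ≥ 2, the probability that a uniformly random monic polynomial of degree n over 𝔽_q has at least one root in 𝔽_q (equivalently, a monic linear factor) is at most 3/4. -/
set_option linter.unusedSectionVars false
set_option linter.unusedVariables false

open Polynomial Finset

section aux
variable {F : Type*} [Field F] [Fintype F]

/-- The evaluation linear map sending coefficients `c` to the values `∑ i, c i * a j ^ i`. -/
def evalMapAux (n k : ℕ) (a : Fin k → F) : (Fin n → F) →ₗ[F] (Fin k → F) where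
  toFun c := fun j => ∑ i : Fin n, c i * a j ^ (i : ℕ)
  map_add' c d := by
    funext j
    simp [add_mul, Finset.sum_add_distrib]
  map_smul' r c := by
    funext j
    simp [Finset.mul_sum, mul_assoc]

lemma evalMapAux_surj (n k : ℕ) (hk : k ≤ n) (a : Fin k → F) (ha : Function.Injective a) :
    Function.Surjective (evalMapAux (F := F) n k a) := by
  intro w
  have hdet : (Matrix.vandermonde a).det ≠ 0 := by
    rw [Matrix.det_vandermonde]
    refine Finset.prod_ne_zero_iff.mpr fun i _ => Finset.prod_ne_zero_iff.mpr fun j hj => ?_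
    refine sub_ne_zero.mpr fun h => ?_
    exact (Finset.mem_Ioi.mp hj).ne' (ha h)
  set u : Fin k → F := (Matrix.vandermonde a)⁻¹.mulVec w with hu
  have huv : (Matrix.vandermonde a).mulVec u = w := by
    rw [hu, Matrix.mulVec_mulVec, Matrix.mul_nonsing_inv _ (isUnit_iff_ne_zero.mpr hdet),
      Matrix.one_mulVec]
  refine ⟨fun i => if h : (i : ℕ) < k then u ⟨i, h⟩ else 0, ?_⟩
  funext j
  have h1 : (evalMapAux (F := F) n k a) (fun i => if h : (i : ℕ) < k then u ⟨i, h⟩ else 0) j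
      = ∑ i ∈ Finset.range n, (if h : i < k then u ⟨i, h⟩ else 0) * a j ^ i := by
    show (∑ i : Fin n, _) = _
    rw [Fin.sum_univ_eq_sum_range (fun i => (if h : i < k then u ⟨i, h⟩ else 0) * a j ^ i)]
  rw [h1, ← Finset.sum_subset (Finset.range_subset_range.mpr hk)
    (by intro x _ hx; rw [dif_neg (by simpa using hx), zero_mul])]
  have h2 : ∑ i ∈ Finset.range k, (if h : i < k then u ⟨i, h⟩ else 0) * a j ^ i
      = ∑ i : Fin k, u i * a j ^ (i : ℕ) := by
    rw [← Fin.sum_univ_eq_sum_range (fun i => (if h : i < k then u ⟨i, h⟩ else 0) * a j ^ i)]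
    exact Finset.sum_congr rfl fun i _ => by rw [dif_pos i.isLt]
  rw [h2, ← huv]
  simp [Matrix.mulVec, Matrix.vandermonde, dotProduct, mul_comm]


lemma fiber_card (n k : ℕ) (hk : k ≤ n) (a : Fin k → F) (ha : Function.Injective a)
    (v : Fin k → F) :
    Nat.card {c : Fin n → F // ∀ j, ∑ i : Fin n, c i * a j ^ (i : ℕ) = v j}
      = Fintype.card F ^ (n - k) := by
  classical
  set L := evalMapAux (F := F) n k a with hL
  have hsurj := evalMapAux_surj (F := F) n k hk a ha
  obtain ⟨c0, hc0⟩ := hsurj v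
  have e : {c : Fin n → F // ∀ j, ∑ i : Fin n, c i * a j ^ (i : ℕ) = v j}
      ≃ LinearMap.ker L :=
    { toFun := fun c => ⟨c.1 - c0, by
        rw [LinearMap.mem_ker, map_sub, hc0]
        have : L c.1 = v := funext c.2
        rw [this, sub_self]⟩
      invFun := fun x => ⟨x.1 + c0, by
        intro j
        have : L (x.1 + c0) = v := by
          rw [map_add, hc0, LinearMap.mem_ker.mp x.2, zero_add]
        exact congrFun this j⟩
      left_inv := fun c => by ext; simp
      right_inv := fun x => by ext; simp }
  rw [Nat.card_congr e]
  have hfr : Module.finrank F (LinearMap.ker L) = n - k := by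
    have h1 := LinearMap.finrank_range_add_finrank_ker L
    rw [LinearMap.range_eq_top.mpr hsurj, finrank_top] at h1
    simp only [Module.finrank_pi, Fintype.card_fin] at h1
    omega
  rw [Nat.card_eq_fintype_card, Module.card_eq_pow_finrank (K := F), hfr]

lemma sum_choose_eq (n k : ℕ) (hk : k ≤ n) [DecidableEq F] :
    ∑ c : Fin n → F,
      ((univ.filter fun x : F => x ^ n + ∑ i : Fin n, c i * x ^ (i : ℕ) = 0).card.choose k)
      = (Fintype.card F).choose k * Fintype.card F ^ (n - k) := by
  have step1 : ∀ c : Fin n → F,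
      (univ.filter fun x : F => x ^ n + ∑ i : Fin n, c i * x ^ (i : ℕ) = 0).card.choose k
      = ∑ S ∈ univ.powersetCard k,
          if S ⊆ (univ.filter fun x : F => x ^ n + ∑ i : Fin n, c i * x ^ (i : ℕ) = 0)
          then 1 else 0 := by
    intro c
    have hset : (univ.filter fun x : F => x ^ n + ∑ i : Fin n, c i * x ^ (i : ℕ) = 0).powersetCard k
        = (univ.powersetCard k).filter
            (fun S => S ⊆ (univ.filter fun x : F => x ^ n + ∑ i : Fin n, c i * x ^ (i : ℕ) = 0)) := by
      ext S
      simp only [Finset.mem_powersetCard, Finset.mem_filter]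
      constructor
      · exact fun h => ⟨⟨Finset.subset_univ _, h.2⟩, h.1⟩
      · exact fun h => ⟨h.2, h.1.2⟩
    rw [← Finset.card_powersetCard, hset, Finset.card_filter]
  calc ∑ c : Fin n → F, _ = ∑ S ∈ univ.powersetCard k, ∑ c : Fin n → F,
        if S ⊆ (univ.filter fun x : F => x ^ n + ∑ i : Fin n, c i * x ^ (i : ℕ) = 0)
        then 1 else 0 := by
        rw [← Finset.sum_comm]
        exact Finset.sum_congr rfl fun c _ => step1 c
    _ = ∑ S ∈ univ.powersetCard k, Fintype.card F ^ (n - k) := by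
        refine Finset.sum_congr rfl fun S hS => ?_
        have hSc : S.card = k := (Finset.mem_powersetCard.mp hS).2
        -- enumerate S
        let e : Fin k ≃ S := (finCongr hSc.symm).trans S.equivFin.symm
        have hmem : ∀ x : F, x ∈ S ↔ ∃ j : Fin k, (e j : F) = x := by
          intro x
          constructor
          · intro hx; exact ⟨e.symm ⟨x, hx⟩, by simp⟩
          · rintro ⟨j, rfl⟩; exact (e j).2
        have hinj : Function.Injective fun j : Fin k => (e j : F) :=
          fun i j h => e.injective (Subtype.ext h)
        rw [← Finset.card_filter]
        have : (univ.filter fun c : Fin n → F =>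
            S ⊆ (univ.filter fun x : F => x ^ n + ∑ i : Fin n, c i * x ^ (i : ℕ) = 0)).card
            = Nat.card {c : Fin n → F // ∀ j : Fin k,
                ∑ i : Fin n, c i * (e j : F) ^ (i : ℕ) = -(e j : F) ^ n} := by
          rw [Nat.card_eq_fintype_card, Fintype.card_subtype]
          congr 1
          refine Finset.filter_congr fun c _ => ?_
          constructor
          · intro h j
            have := Finset.mem_filter.mp (h (e j).2)
            linear_combination this.2
          · intro h x hx
            obtain ⟨j, rfl⟩ := (hmem x).mp hx
            simp only [Finset.mem_filter, Finset.mem_univ, true_and]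
            linear_combination h j
        rw [this, fiber_card n k hk _ hinj]
    _ = (Fintype.card F).choose k * Fintype.card F ^ (n - k) := by
        rw [Finset.sum_const, Finset.card_powersetCard, Finset.card_univ, smul_eq_mul]

lemma point3 (r : ℕ) : (if 0 < r then 1 else 0) + r.choose 2 ≤ r.choose 1 + r.choose 3 := by
  match r with
  | 0 => simp
  | (s + 1) =>
    rw [if_pos (Nat.succ_pos s)]
    have h2 : (s + 1).choose 2 = s.choose 1 + s.choose 2 := Nat.choose_succ_succ s 1
    have h3 : (s + 1).choose 3 = s.choose 2 + s.choose 3 := Nat.choose_succ_succ s 2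
    rw [h2, h3, Nat.choose_one_right, Nat.choose_one_right]
    omega

lemma point2 (r : ℕ) (hr : r ≤ 2) : (if 0 < r then 1 else 0) + r.choose 2 ≤ r.choose 1 := by
  interval_cases r <;> simp

lemma card_roots_le_aux [DecidableEq F] (n : ℕ) (hn : 0 < n) (c : Fin n → F) :
    (univ.filter fun x : F => x ^ n + ∑ i : Fin n, c i * x ^ (i : ℕ) = 0).card ≤ n := by
  set p : F[X] := X ^ n + ∑ i : Fin n, C (c i) * X ^ (i : ℕ) with hp
  have hdeglt : (∑ i : Fin n, C (c i) * X ^ (i : ℕ)).degree < (X ^ n : F[X]).degree := by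
    rw [degree_X_pow]
    apply lt_of_le_of_lt (degree_sum_le _ _)
    rw [Finset.sup_lt_iff (by exact_mod_cast WithBot.bot_lt_coe n)]
    intro i _
    exact lt_of_le_of_lt (degree_C_mul_X_pow_le _ _) (by exact_mod_cast i.isLt)
  have hdeg : p.degree = n := by rw [hp, degree_add_eq_left_of_degree_lt hdeglt, degree_X_pow]
  have hne : p ≠ 0 := by
    intro h0
    rw [h0, degree_zero] at hdeg
    exact absurd hdeg.symm (by simp)
  have hsub : (univ.filter fun x : F => x ^ n + ∑ i : Fin n, c i * x ^ (i : ℕ) = 0)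
      ⊆ p.roots.toFinset := by
    intro x hx
    rw [Multiset.mem_toFinset, mem_roots hne]
    have := (Finset.mem_filter.mp hx).2
    simp only [IsRoot, hp, eval_add, eval_pow, eval_X, eval_finset_sum, eval_mul, eval_C]
    exact this
  calc (univ.filter fun x : F => x ^ n + ∑ i : Fin n, c i * x ^ (i : ℕ) = 0).card
      ≤ p.roots.toFinset.card := Finset.card_le_card hsub
    _ ≤ Multiset.card p.roots := Multiset.toFinset_card_le _
    _ ≤ p.natDegree := card_roots' p
    _ = n := natDegree_eq_of_degree_eq_some hdeg

end aux

/-- For every finite field with `q` elements and every `n ≥ 2`, the probability that a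
uniformly random monic polynomial of degree `n` (lower coefficients i.i.d. uniform) has a
root in the field is at most `3/4`. -/
theorem stmt7 (F : Type*) [Field F] [Fintype F] (q : ℕ) (hq : q = Fintype.card F)
    (n : ℕ) (hn : 2 ≤ n) :
    (Nat.card {c : Fin n → F //
        ∃ a : F, Polynomial.eval a (X ^ n + ∑ i : Fin n, C (c i) * X ^ (i : ℕ)) = 0} : ℝ)
      / (q : ℝ) ^ n ≤ 3 / 4 := by
  classical
  have hq2 : 2 ≤ q := by rw [hq]; exact Fintype.one_lt_card
  have harith : 2 < n → (n - 3 + 2 = n - 1 ∧ n - 3 + 1 = n - 2 ∧ n - 3 + 3 = n) := by omega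
  -- translate the subtype count to a filter count
  have hNcard : Nat.card {c : Fin n → F //
      ∃ a : F, Polynomial.eval a (X ^ n + ∑ i : Fin n, C (c i) * X ^ (i : ℕ)) = 0}
      = (univ.filter fun c : Fin n → F =>
          0 < (univ.filter fun x : F => x ^ n + ∑ i : Fin n, c i * x ^ (i : ℕ) = 0).card).card := by
    rw [Nat.card_eq_fintype_card, Fintype.card_subtype]
    congr 1
    ext c
    simp only [Finset.mem_filter, Finset.mem_univ, true_and, Finset.card_pos,
      Finset.filter_nonempty_iff, eval_add, eval_pow, eval_X, eval_finset_sum, eval_mul, eval_C]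
  set N : ℕ := (univ.filter fun c : Fin n → F =>
      0 < (univ.filter fun x : F => x ^ n + ∑ i : Fin n, c i * x ^ (i : ℕ) = 0).card).card with hN
  clear_value N
  rw [hNcard]
  have hkey1 := sum_choose_eq (F := F) n 1 (Nat.le_of_succ_le hn)
  have hkey2 := sum_choose_eq (F := F) n 2 hn
  rw [← hq] at hkey1 hkey2
  have hQ : (2 : ℝ) ≤ (q : ℝ) := by exact_mod_cast hq2
  have hQ0 : (0 : ℝ) < (q : ℝ) := by linarith
  have hQn : (0 : ℝ) < (q : ℝ) ^ n := pow_pos hQ0 n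
  rw [div_le_iff₀ hQn]
  have hC1 : q.choose 1 = q := Nat.choose_one_right q
  have hC2 : q.choose 2 * 2 = q * (q - 1) := by
    rw [Nat.choose_succ_right_eq, Nat.choose_one_right]
  have hC2R : (q.choose 2 : ℝ) = (q : ℝ) * ((q : ℝ) - 1) / 2 := by
    have := congrArg (fun m : ℕ => (m : ℝ)) hC2
    push_cast [Nat.cast_sub (Nat.le_of_succ_le hq2)] at this
    linarith
  rcases eq_or_lt_of_le hn with h2 | h3
  · -- n = 2
    have hpt : ∀ c : Fin n → F,
        (if 0 < (univ.filter fun x : F => x ^ n + ∑ i : Fin n, c i * x ^ (i : ℕ) = 0).card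
          then 1 else 0)
          + (univ.filter fun x : F => x ^ n + ∑ i : Fin n, c i * x ^ (i : ℕ) = 0).card.choose 2
        ≤ (univ.filter fun x : F => x ^ n + ∑ i : Fin n, c i * x ^ (i : ℕ) = 0).card.choose 1 := by
      intro c
      refine point2 _ ?_
      have h := card_roots_le_aux (F := F) n (Nat.lt_of_lt_of_le Nat.zero_lt_two hn) c
      exact le_trans h (le_of_eq h2.symm)
    have hsum : N + ∑ c : Fin n → F,
        (univ.filter fun x : F => x ^ n + ∑ i : Fin n, c i * x ^ (i : ℕ) = 0).card.choose 2
        ≤ ∑ c : Fin n → F,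
        (univ.filter fun x : F => x ^ n + ∑ i : Fin n, c i * x ^ (i : ℕ) = 0).card.choose 1 := by
      rw [hN, Finset.card_filter, ← Finset.sum_add_distrib]
      exact Finset.sum_le_sum fun c _ => hpt c
    rw [hkey1, hkey2] at hsum
    have hsumR : (N : ℝ) + (q.choose 2 : ℝ) * (q : ℝ) ^ (n - 2)
        ≤ (q.choose 1 : ℝ) * (q : ℝ) ^ (n - 1) := by exact_mod_cast hsum
    rw [hC1, hC2R] at hsumR
    have e1 : ((q : ℝ)) ^ (n - 1) = (q : ℝ) := by rw [← h2]; norm_num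
    have e2 : ((q : ℝ)) ^ (n - 2) = 1 := by rw [← h2]; norm_num
    have en : ((q : ℝ)) ^ n = (q : ℝ) ^ 2 := by rw [← h2]
    rw [e1, e2] at hsumR
    rw [en]
    nlinarith [hsumR, hQ]
  · -- n ≥ 3
    have hkey3 := sum_choose_eq (F := F) n 3 h3
    rw [← hq] at hkey3
    have hsum : N + ∑ c : Fin n → F,
        (univ.filter fun x : F => x ^ n + ∑ i : Fin n, c i * x ^ (i : ℕ) = 0).card.choose 2
        ≤ (∑ c : Fin n → F,
            (univ.filter fun x : F => x ^ n + ∑ i : Fin n, c i * x ^ (i : ℕ) = 0).card.choose 1)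
          + ∑ c : Fin n → F,
            (univ.filter fun x : F => x ^ n + ∑ i : Fin n, c i * x ^ (i : ℕ) = 0).card.choose 3 := by
      rw [hN, Finset.card_filter, ← Finset.sum_add_distrib, ← Finset.sum_add_distrib]
      exact Finset.sum_le_sum fun c _ => point3 _
    rw [hkey1, hkey2, hkey3] at hsum
    have hsumR : (N : ℝ) + (q.choose 2 : ℝ) * (q : ℝ) ^ (n - 2)
        ≤ (q.choose 1 : ℝ) * (q : ℝ) ^ (n - 1) + (q.choose 3 : ℝ) * (q : ℝ) ^ (n - 3) := by
      exact_mod_cast hsum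
    have hC3 : q.choose 3 * 3 = q.choose 2 * (q - 2) := by
      rw [Nat.choose_succ_right_eq]
    have hC3R : (q.choose 3 : ℝ) = (q : ℝ) * ((q : ℝ) - 1) * ((q : ℝ) - 2) / 6 := by
      have := congrArg (fun m : ℕ => (m : ℝ)) hC3
      push_cast [Nat.cast_sub hq2] at this
      rw [hC2R] at this
      linarith
    rw [hC1, hC2R, hC3R] at hsumR
    have e1 : ((q : ℝ)) ^ (n - 1) = (q : ℝ) ^ (n - 3) * (q : ℝ) ^ 2 := by
      rw [← pow_add, (harith h3).1]
    have e2 : ((q : ℝ)) ^ (n - 2) = (q : ℝ) ^ (n - 3) * (q : ℝ) := by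
      rw [← pow_succ, (harith h3).2.1]
    have en : ((q : ℝ)) ^ n = (q : ℝ) ^ (n - 3) * (q : ℝ) ^ 3 := by
      rw [← pow_add, (harith h3).2.2]
    rw [e1, e2] at hsumR
    rw [en]
    have hp : (0 : ℝ) ≤ (q : ℝ) ^ (n - 3) := le_of_lt (pow_pos hQ0 _)
    nlinarith [hsumR, hQ, hp, mul_nonneg hp (by nlinarith : (0:ℝ) ≤ ((q:ℝ) - 2) * ((q:ℝ) + 2) * (q:ℝ))]
end

section
/- For every finite field 𝔽_q, every n ≥ 2, every i ∈ {1,...,n}, and every nonnegative integer λ, the probability that a uniformly random monic polynomial of degree n over 𝔽_q has exactly λ irreducible factors of degree i (counted with multiplicity) is at most e^{-cλ}, where c > 0 is an absolute constant independent of q, n, i, λ. -/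
open Polynomial UniqueFactorizationMonoid Finset

/-!
A monic `f` of degree `n` with exactly `k` irreducible factors of degree `i` is the product of
a multiset of `k` monic irreducibles of degree `i` and a monic cofactor of degree `n - i k` with
no irreducible factor of degree `i`. Counting roots to first and second order shows that at most
half of the monic polynomials of any positive degree have no root. For `i ≥ 2` this bounds the
number of monic irreducibles of degree `i` by `q^i / 2`, and then the number of `k`-multisets of
them by `(3/4)^k q^(i k)`. For `i = 1` there are at most `(3/4)^(k-1) q^k` multisets of linear
factors, and the cofactor has no root, which gives the missing factor `1/2` unless the cofactor
is `1`, that is `k = n ≥ 2`. Either way the probability is at most `(9/10)^k`.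
-/

theorem Nat.succ_mul_multichoose_succ (m k : ℕ) :
    (k + 1) * Nat.multichoose m (k + 1) = (m + k) * Nat.multichoose m k := by
  rcases m with _ | m
  · cases k <;> simp [Nat.multichoose_zero_succ]
  · rw [Nat.multichoose_eq, Nat.multichoose_eq, mul_comm,
      show m + 1 + (k + 1) - 1 = m + k + 1 by omega, show m + 1 + k - 1 = m + k by omega,
      ← Nat.add_one_mul_choose_eq]
    ring

theorem Nat.multichoose_succ_le_mul_pow {m M : ℕ} (hmM : m ≤ M) (hM : 2 ≤ M) (k : ℕ) :
    (Nat.multichoose m (k + 1) : ℝ) ≤ m * (3 / 4 * M) ^ k := by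
  induction k with
  | zero => simp [Nat.multichoose_one_right]
  | succ k ih =>
    have hrec : ((k : ℝ) + 2) * Nat.multichoose m (k + 2)
        = (m + k + 1) * Nat.multichoose m (k + 1) := by
      exact_mod_cast Nat.succ_mul_multichoose_succ m (k + 1)
    have hratio : (m + k + 1 : ℝ) ≤ (k + 2) * (3 / 4 * M) := by
      have : (m : ℝ) ≤ M := by exact_mod_cast hmM
      have : (2 : ℝ) ≤ M := by exact_mod_cast hM
      have : (0 : ℝ) ≤ k := k.cast_nonneg
      nlinarith
    rw [← mul_le_mul_iff_right₀ (by positivity : (0 : ℝ) < k + 2), hrec]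
    calc (m + k + 1 : ℝ) * Nat.multichoose m (k + 1)
        ≤ ((k + 2) * (3 / 4 * M)) * (m * (3 / 4 * M) ^ k) :=
          mul_le_mul hratio ih (by positivity) (by positivity)
      _ = (k + 2) * (m * (3 / 4 * M) ^ (k + 1)) := by ring

/-- Twice the Bonferroni inequality `1[k = 0] ≤ 1 - k + k(k-1)/2`. -/
theorem Nat.two_mul_ite_add_two_mul_le (k : ℕ) :
    2 * (if k = 0 then 1 else 0) + 2 * k ≤ 2 + (k * k - k) := by
  rcases k with _ | _ | k
  · simp
  · simp
  · simp only [add_eq_zero, one_ne_zero, and_false, ↓reduceIte]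
    ring_nf
    omega

theorem Finset.card_sym {α : Type*} [DecidableEq α] (s : Finset α) (n : ℕ) :
    #(s.sym n) = Nat.multichoose #s n := by
  have : s.sym n = (univ : Finset (Sym s n)).map
      ⟨Sym.map Subtype.val, Sym.map_injective Subtype.val_injective n⟩ := by
    ext m
    simp only [mem_sym_iff, mem_map, mem_univ, true_and, Function.Embedding.coeFn_mk]
    refine ⟨fun h => ⟨m.attach.map fun a : {x // x ∈ m} => ⟨a.1, h a.1 a.2⟩, ?_⟩, ?_⟩
    · rw [Sym.map_map]
      exact m.attach_map_coe
    · rintro ⟨m, rfl⟩ a ha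
      obtain ⟨b, -, rfl⟩ := Sym.mem_map.1 ha
      exact b.2
  rw [this, card_map, card_univ, Sym.card_sym_eq_multichoose, Fintype.card_coe]

section

open scoped Classical

section Monics

variable {R : Type*} [CommRing R]

noncomputable def monicOfCoeffs (n : ℕ) (c : Fin n → R) : R[X] :=
  X ^ n + ∑ j : Fin n, C (c j) * X ^ (j : ℕ)

theorem coeff_monicOfCoeffs (n : ℕ) (c : Fin n → R) (j : Fin n) :
    (monicOfCoeffs n c).coeff j = c j := by
  simp [monicOfCoeffs, coeff_X_pow, j.2.ne, Fin.val_inj]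

theorem monicOfCoeffs_injective (n : ℕ) : Function.Injective (monicOfCoeffs (R := R) n) :=
  fun c c' h => funext fun j => by
    simpa only [coeff_monicOfCoeffs] using congrArg (coeff · j) h

theorem monic_monicOfCoeffs (n : ℕ) (c : Fin n → R) : (monicOfCoeffs n c).Monic :=
  monic_X_pow_add (degree_sum_fin_lt c)

theorem natDegree_monicOfCoeffs [Nontrivial R] (n : ℕ) (c : Fin n → R) :
    (monicOfCoeffs n c).natDegree = n := by
  rw [monicOfCoeffs, natDegree_add_eq_left_of_degree_lt, natDegree_X_pow]
  simpa only [degree_X_pow] using degree_sum_fin_lt c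

theorem Polynomial.Monic.eq_monicOfCoeffs {f : R[X]} (hf : f.Monic) :
    f = monicOfCoeffs f.natDegree fun j => f.coeff j := by
  rw [monicOfCoeffs, Fin.sum_univ_eq_sum_range (fun j => C (f.coeff j) * X ^ j)]
  exact hf.as_sum

variable [Fintype R]

noncomputable def monics (n : ℕ) : Finset R[X] := univ.image (monicOfCoeffs n)

theorem mem_monics [Nontrivial R] {n : ℕ} {f : R[X]} :
    f ∈ monics n ↔ f.Monic ∧ f.natDegree = n := by
  refine ⟨?_, fun ⟨hf, hn⟩ => ?_⟩
  · rw [monics, mem_image]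
    rintro ⟨c, -, rfl⟩
    exact ⟨monic_monicOfCoeffs n c, natDegree_monicOfCoeffs n c⟩
  · subst hn
    exact mem_image.2 ⟨_, mem_univ _, hf.eq_monicOfCoeffs.symm⟩

theorem card_monics (n : ℕ) : #(monics (R := R) n) = Fintype.card R ^ n := by
  rw [monics, card_image_of_injective _ (monicOfCoeffs_injective n), card_univ,
    Fintype.card_fun, Fintype.card_fin]

theorem natCard_subtype_monicOfCoeffs (n : ℕ) (P : R[X] → Prop) [DecidablePred P] :
    Nat.card {c : Fin n → R // P (monicOfCoeffs n c)} = #{f ∈ monics n | P f} := by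
  rw [Nat.card_eq_fintype_card, Fintype.card_subtype, monics, filter_image,
    card_image_of_injective _ (monicOfCoeffs_injective n)]

theorem card_filter_dvd_monics [Nontrivial R] {p : R[X]} (hp : p.Monic) {m : ℕ}
    (hpm : p.natDegree ≤ m) :
    #{f ∈ monics m | p ∣ f} = Fintype.card R ^ (m - p.natDegree) := by
  have : {f ∈ monics (R := R) m | p ∣ f} = (monics (m - p.natDegree)).image (p * ·) := by
    ext f
    simp only [mem_filter, mem_image, mem_monics]
    constructor
    · rintro ⟨⟨hf, hfm⟩, g, rfl⟩
      have hg := hp.of_mul_monic_left hf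
      rw [hp.natDegree_mul hg] at hfm
      exact ⟨g, ⟨hg, by omega⟩, rfl⟩
    · rintro ⟨g, ⟨hg, hgm⟩, rfl⟩
      exact ⟨⟨hp.mul hg, by rw [hp.natDegree_mul hg]; omega⟩, dvd_mul_right p g⟩
  rw [this, card_image_of_injective _ hp.isRegular.left, card_monics]

theorem Multiset.prod_mem_monics [Nontrivial R] {s : Multiset R[X]} {i : ℕ}
    (hs : ∀ p ∈ s, p ∈ monics i) :
    s.prod ∈ monics (i * Multiset.card s) := by
  simp only [mem_monics] at hs ⊢
  refine ⟨by simpa using monic_multiset_prod_of_monic s id fun p hp => (hs p hp).1, ?_⟩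
  rw [natDegree_multiset_prod_of_monic _ fun p hp => (hs p hp).1,
    Multiset.map_congr rfl fun p hp => (hs p hp).2, Multiset.map_const', Multiset.sum_replicate,
    smul_eq_mul, mul_comm]

end Monics

section Factors

variable {K : Type*} [Field K]

noncomputable def numFactorsOfDegree (i : ℕ) (f : K[X]) : ℕ :=
  Multiset.card ((factors f).filter fun p => p.natDegree = i)

theorem numFactorsOfDegree_eq_card_filter_normalizedFactors (i : ℕ) (f : K[X]) :
    numFactorsOfDegree i f
      = Multiset.card ((normalizedFactors f).filter fun p => p.natDegree = i) := by
  rw [numFactorsOfDegree, normalizedFactors, Multiset.filter_map, Multiset.card_map]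
  congr 2
  ext p
  simp [natDegree_eq_of_degree_eq degree_normalize]

theorem Polynomial.Monic.exists_eq_prod_mul {f : K[X]} (hf : f.Monic) (i : ℕ) :
    ∃ s : Multiset K[X], ∃ g : K[X], f = s.prod * g ∧
      Multiset.card s = numFactorsOfDegree i f ∧
      (∀ p ∈ s, p.Monic ∧ Irreducible p ∧ p.natDegree = i) ∧
      g.Monic ∧ ∀ p, Irreducible p → p ∣ g → p.natDegree ≠ i := by
  have hmem (p : K[X]) (hp : p ∈ normalizedFactors f) : Irreducible p ∧ p.Monic :=
    ((Polynomial.mem_normalizedFactors_iff hf.ne_zero).1 hp).imp_right And.left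
  refine ⟨(normalizedFactors f).filter fun p => p.natDegree = i,
    ((normalizedFactors f).filter fun p => ¬ p.natDegree = i).prod, ?_, ?_, ?_, ?_, ?_⟩
  · rw [← Multiset.prod_add, Multiset.filter_add_not, prod_normalizedFactors_eq hf.ne_zero,
      hf.normalize_eq_self]
  · rw [numFactorsOfDegree_eq_card_filter_normalizedFactors]
  · intro p hp
    obtain ⟨hp, hdeg⟩ := Multiset.mem_filter.1 hp
    exact ⟨(hmem p hp).2, (hmem p hp).1, hdeg⟩
  · simpa using
      monic_multiset_prod_of_monic _ id fun p hp => (hmem p (Multiset.mem_filter.1 hp).1).2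
  · intro p hp hpg
    obtain ⟨a, ha, hpa⟩ := hp.prime.exists_mem_multiset_dvd hpg
    obtain ⟨ha, hdeg⟩ := Multiset.mem_filter.1 ha
    rwa [natDegree_eq_of_degree_eq
      (degree_eq_degree_of_associated (hp.associated_of_dvd (hmem a ha).1 hpa))]

end Factors

section FiniteField

variable {F : Type*} [Field F] [Fintype F]

theorem card_filter_isRoot_monics {m : ℕ} (hm : 1 ≤ m) (a : F) :
    #{f ∈ monics m | f.IsRoot a} = Fintype.card F ^ (m - 1) := by
  simpa only [dvd_iff_isRoot, natDegree_X_sub_C] using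
    card_filter_dvd_monics (monic_X_sub_C a) (by rwa [natDegree_X_sub_C])

theorem card_filter_isRoot_isRoot_monics {m : ℕ} (hm : 2 ≤ m) {a b : F} (hab : a ≠ b) :
    #{f ∈ monics m | f.IsRoot a ∧ f.IsRoot b} = Fintype.card F ^ (m - 2) := by
  have hmonic := (monic_X_sub_C a).mul (monic_X_sub_C b)
  have hdeg : ((X - C a) * (X - C b)).natDegree = 2 := by
    rw [(monic_X_sub_C a).natDegree_mul (monic_X_sub_C b), natDegree_X_sub_C, natDegree_X_sub_C]
  have hdvd (f : F[X]) : (X - C a) * (X - C b) ∣ f ↔ f.IsRoot a ∧ f.IsRoot b := by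
    rw [← dvd_iff_isRoot, ← dvd_iff_isRoot]
    exact ⟨fun h => ⟨dvd_of_mul_right_dvd h, dvd_of_mul_left_dvd h⟩, fun ⟨ha, hb⟩ =>
      (pairwise_coprime_X_sub_C (s := id) Function.injective_id hab).mul_dvd ha hb⟩
  rw [← hdeg, ← card_filter_dvd_monics hmonic (hdeg ▸ hm)]
  simp only [hdvd]

theorem sum_card_roots_monics {m : ℕ} (hm : 1 ≤ m) :
    ∑ f ∈ monics m, #{a : F | f.IsRoot a} = Fintype.card F ^ m := by
  calc ∑ f ∈ monics m, #{a : F | f.IsRoot a} = ∑ a : F, #{f ∈ monics m | f.IsRoot a} :=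
        sum_card_bipartiteAbove_eq_sum_card_bipartiteBelow _
    _ = Fintype.card F ^ m := by
        rw [sum_congr rfl fun a _ => card_filter_isRoot_monics hm a, sum_const, card_univ,
          smul_eq_mul, ← pow_succ', Nat.sub_add_cancel hm]

theorem sum_card_offDiag_roots_monics_le {m : ℕ} (hm : 2 ≤ m) :
    ∑ f ∈ monics m, #({a | f.IsRoot a} : Finset F).offDiag ≤ Fintype.card F ^ m := by
  have hoff (f : F[X]) : ({a | f.IsRoot a} : Finset F).offDiag
      = {ab ∈ (univ : Finset F).offDiag | f.IsRoot ab.1 ∧ f.IsRoot ab.2} := by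
    ext ⟨a, b⟩
    simp only [mem_offDiag, mem_filter, mem_univ, true_and]
    tauto
  set q := Fintype.card F
  calc ∑ f ∈ monics m, #({a | f.IsRoot a} : Finset F).offDiag
      = ∑ f ∈ monics m,
          #{ab ∈ (univ : Finset F).offDiag | f.IsRoot ab.1 ∧ f.IsRoot ab.2} := by
        simp only [hoff]
    _ = ∑ ab ∈ (univ : Finset F).offDiag, #{f ∈ monics m | f.IsRoot ab.1 ∧ f.IsRoot ab.2} :=
        sum_card_bipartiteAbove_eq_sum_card_bipartiteBelow _
    _ = (q * q - q) * q ^ (m - 2) := by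
        rw [sum_congr rfl fun ab hab =>
          card_filter_isRoot_isRoot_monics hm (mem_offDiag.1 hab).2.2,
          sum_const, smul_eq_mul, offDiag_card, card_univ]
    _ ≤ q ^ 2 * q ^ (m - 2) := by
        gcongr; rw [sq]; exact Nat.sub_le _ _
    _ = q ^ m := by rw [← pow_add, Nat.add_sub_cancel' hm]

theorem two_mul_card_filter_rootless_monics_le {m : ℕ} (hm : 1 ≤ m) :
    2 * #{f ∈ monics m | ∀ a : F, ¬ f.IsRoot a} ≤ Fintype.card F ^ m := by
  rcases hm.eq_or_lt with rfl | hm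
  · have : {f ∈ monics (R := F) 1 | ∀ a, ¬ f.IsRoot a} = ∅ := by
      refine filter_eq_empty_iff.2 fun f hf hroot => ?_
      obtain ⟨a, ha⟩ := exists_root_of_degree_eq_one <|
        (degree_eq_iff_natDegree_eq_of_pos one_pos).2 (mem_monics.1 hf).2
      exact hroot a ha
    rw [this, card_empty, mul_zero]
    exact Nat.zero_le _
  set q := Fintype.card F
  have hrootless (f : F[X]) : (∀ a, ¬ f.IsRoot a) ↔ #({a | f.IsRoot a} : Finset F) = 0 := by
    simp [filter_eq_empty_iff]
  have key :
      2 * #{f ∈ monics m | ∀ a : F, ¬ f.IsRoot a} + 2 * q ^ m ≤ 2 * q ^ m + q ^ m := by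
    calc 2 * #{f ∈ monics m | ∀ a : F, ¬ f.IsRoot a} + 2 * q ^ m
        = ∑ f ∈ monics m, (2 * (if #({a | f.IsRoot a} : Finset F) = 0 then 1 else 0)
            + 2 * #({a | f.IsRoot a} : Finset F)) := by
          rw [sum_add_distrib, ← mul_sum, ← mul_sum, sum_card_roots_monics hm.le, card_filter]
          simp only [hrootless]
          rfl
      _ ≤ ∑ f ∈ monics m, (2 + #({a | f.IsRoot a} : Finset F).offDiag) :=
          sum_le_sum fun f _ => by rw [offDiag_card]; exact Nat.two_mul_ite_add_two_mul_le _
      _ = 2 * q ^ m + ∑ f ∈ monics m, #({a | f.IsRoot a} : Finset F).offDiag := by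
          rw [sum_add_distrib, sum_const, card_monics, smul_eq_mul, mul_comm]
      _ ≤ 2 * q ^ m + q ^ m := by
          gcongr; exact sum_card_offDiag_roots_monics_le hm
  omega

noncomputable def irreducibleMonics (i : ℕ) : Finset F[X] := {p ∈ monics i | Irreducible p}

noncomputable def monicsWithoutFactorOfDegree (i d : ℕ) : Finset F[X] :=
  {g ∈ monics d | ∀ p, Irreducible p → p ∣ g → p.natDegree ≠ i}

theorem exists_prod_mul_of_numFactorsOfDegree_eq {n i k : ℕ} {f : F[X]} (hf : f ∈ monics n)
    (hk : numFactorsOfDegree i f = k) :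
    i * k ≤ n ∧ ∃ s ∈ (irreducibleMonics (F := F) i).sym k,
      ∃ g ∈ monicsWithoutFactorOfDegree i (n - i * k), f = (s : Multiset F[X]).prod * g := by
  obtain ⟨hfm, rfl⟩ := mem_monics.1 hf
  obtain ⟨s, g, rfl, hs, hirr, hg, hgi⟩ := hfm.exists_eq_prod_mul i
  have hsm : s.prod ∈ monics (i * k) := by
    rw [← hk, ← hs]
    exact Multiset.prod_mem_monics fun p hp => mem_monics.2 ⟨(hirr p hp).1, (hirr p hp).2.2⟩
  have hdeg : (s.prod * g).natDegree = i * k + g.natDegree := by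
    rw [(mem_monics.1 hsm).1.natDegree_mul hg, (mem_monics.1 hsm).2]
  refine ⟨by omega, ⟨s, hs.trans hk⟩, ?_, g, ?_, rfl⟩
  · refine mem_sym_iff.2 fun p hp => mem_filter.2 ⟨mem_monics.2 ?_, (hirr p hp).2.1⟩
    exact ⟨(hirr p hp).1, (hirr p hp).2.2⟩
  · exact mem_filter.2 ⟨mem_monics.2 ⟨hg, by omega⟩, hgi⟩

theorem card_filter_numFactorsOfDegree_monics_le (n i k : ℕ) :
    #{f ∈ monics (R := F) n | numFactorsOfDegree i f = k}
      ≤ Nat.multichoose #(irreducibleMonics (F := F) i) k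
        * #(monicsWithoutFactorOfDegree (F := F) i (n - i * k)) := by
  calc #{f ∈ monics (R := F) n | numFactorsOfDegree i f = k}
      ≤ #(((irreducibleMonics i).sym k ×ˢ monicsWithoutFactorOfDegree i (n - i * k)).image
          fun x : Sym F[X] k × F[X] => (x.1 : Multiset F[X]).prod * x.2) := by
        refine card_le_card fun f hf => ?_
        obtain ⟨hf, hk⟩ := mem_filter.1 hf
        obtain ⟨-, s, hs, g, hg, rfl⟩ := exists_prod_mul_of_numFactorsOfDegree_eq hf hk
        exact mem_image.2 ⟨(s, g), mem_product.2 ⟨hs, hg⟩, rfl⟩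
    _ ≤ _ := card_image_le.trans_eq (by rw [card_product, card_sym])

theorem filter_numFactorsOfDegree_monics_eq_empty {n i k : ℕ} (h : n < i * k) :
    {f ∈ monics (R := F) n | numFactorsOfDegree i f = k} = ∅ :=
  filter_eq_empty_iff.2 fun _ hf hk =>
    (exists_prod_mul_of_numFactorsOfDegree_eq hf hk).1.not_gt h

theorem two_mul_card_irreducibleMonics_le {i : ℕ} (hi : 2 ≤ i) :
    2 * #(irreducibleMonics (F := F) i) ≤ Fintype.card F ^ i := by
  refine le_trans (Nat.mul_le_mul_left 2 (card_le_card fun p hp => ?_))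
    (two_mul_card_filter_rootless_monics_le (by omega))
  obtain ⟨hpm, hirr⟩ := mem_filter.1 hp
  refine mem_filter.2 ⟨hpm, fun a ha => ?_⟩
  have := degree_eq_one_of_irreducible_of_root hirr ha
  rw [degree_eq_natDegree hirr.ne_zero, (mem_monics.1 hpm).2] at this
  norm_cast at this
  omega

theorem two_mul_card_monicsWithoutFactorOfDegree_one_le {d : ℕ} (hd : 1 ≤ d) :
    2 * #(monicsWithoutFactorOfDegree (F := F) 1 d) ≤ Fintype.card F ^ d := by
  refine le_trans (Nat.mul_le_mul_left 2 (card_le_card fun g hg => ?_))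
    (two_mul_card_filter_rootless_monics_le hd)
  obtain ⟨hgm, hg⟩ := mem_filter.1 hg
  exact mem_filter.2 ⟨hgm, fun a ha =>
    hg _ (irreducible_X_sub_C a) (dvd_iff_isRoot.2 ha) (natDegree_X_sub_C a)⟩

theorem card_monicsWithoutFactorOfDegree_le (i d : ℕ) :
    #(monicsWithoutFactorOfDegree (F := F) i d) ≤ Fintype.card F ^ d :=
  (card_filter_le _ _).trans_eq (card_monics d)

theorem multichoose_mul_card_monicsWithoutFactorOfDegree_le_of_two_le {i : ℕ} (hi : 2 ≤ i)
    (k d : ℕ) :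
    (Nat.multichoose #(irreducibleMonics (F := F) i) (k + 1) : ℝ)
        * #(monicsWithoutFactorOfDegree (F := F) i d)
      ≤ (3 / 4) ^ (k + 1) * Fintype.card F ^ (i * (k + 1) + d) := by
  set M : ℕ := Fintype.card F ^ i
  have hM : 2 ≤ M := Fintype.one_lt_card.trans_le (Nat.le_self_pow (by omega) _)
  have hm : 2 * #(irreducibleMonics (F := F) i) ≤ M := two_mul_card_irreducibleMonics_le hi
  have hmR : (#(irreducibleMonics (F := F) i) : ℝ) ≤ M / 2 := by
    rw [le_div_iff₀ two_pos, mul_comm]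
    exact_mod_cast hm
  calc (Nat.multichoose #(irreducibleMonics (F := F) i) (k + 1) : ℝ)
        * #(monicsWithoutFactorOfDegree (F := F) i d)
      ≤ (M / 2 * (3 / 4 * M) ^ k) * (Fintype.card F : ℝ) ^ d := by
        gcongr
        · exact (Nat.multichoose_succ_le_mul_pow (by omega) hM k).trans (by gcongr)
        · exact_mod_cast card_monicsWithoutFactorOfDegree_le i d
    _ ≤ (3 / 4 * M * (3 / 4 * M) ^ k) * (Fintype.card F : ℝ) ^ d := by
        gcongr; linarith
    _ = (3 / 4) ^ (k + 1) * Fintype.card F ^ (i * (k + 1) + d) := by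
        simp only [M, Nat.cast_pow, pow_add, pow_mul]
        ring

theorem multichoose_mul_card_monicsWithoutFactorOfDegree_one_le {k d : ℕ} (hkd : 1 ≤ k + d) :
    (Nat.multichoose #(irreducibleMonics (F := F) 1) (k + 1) : ℝ)
        * #(monicsWithoutFactorOfDegree (F := F) 1 d)
      ≤ (9 / 10) ^ (k + 1) * Fintype.card F ^ (k + 1 + d) := by
  set q := Fintype.card F
  have hq : 2 ≤ q := Fintype.one_lt_card
  have hm : #(irreducibleMonics (F := F) 1) ≤ q :=
    (card_filter_le _ _).trans_eq ((card_monics 1).trans (pow_one q))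
  have hchoose : (Nat.multichoose #(irreducibleMonics (F := F) 1) (k + 1) : ℝ)
      ≤ (3 / 4) ^ k * q ^ (k + 1) := by
    calc _ ≤ (#(irreducibleMonics (F := F) 1) : ℝ) * (3 / 4 * q) ^ k :=
          Nat.multichoose_succ_le_mul_pow hm hq k
      _ ≤ q * (3 / 4 * q) ^ k := by gcongr
      _ = (3 / 4) ^ k * q ^ (k + 1) := by ring
  rcases Nat.eq_zero_or_pos d with rfl | hd
  · obtain ⟨j, rfl⟩ : ∃ j, k = j + 1 := ⟨k - 1, by omega⟩
    have hT : (#(monicsWithoutFactorOfDegree (F := F) 1 0) : ℝ) ≤ 1 := by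
      exact_mod_cast (card_monicsWithoutFactorOfDegree_le 1 0).trans_eq (pow_zero q)
    have hpow : (3 / 4 : ℝ) ^ (j + 1) ≤ (9 / 10) ^ (j + 2) := by
      rw [pow_succ, pow_succ, pow_succ, mul_assoc]
      exact mul_le_mul (pow_le_pow_left₀ (by norm_num) (by norm_num) j) (by norm_num)
        (by norm_num) (by positivity)
    calc _ ≤ (3 / 4) ^ (j + 1) * (q : ℝ) ^ (j + 2) * 1 :=
          mul_le_mul hchoose hT (by positivity) (by positivity)
      _ ≤ (9 / 10) ^ (j + 2) * (q : ℝ) ^ (j + 2) := by rw [mul_one]; gcongr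
  · have hT : (#(monicsWithoutFactorOfDegree (F := F) 1 d) : ℝ) ≤ q ^ d / 2 := by
      rw [le_div_iff₀ two_pos, mul_comm]
      exact_mod_cast two_mul_card_monicsWithoutFactorOfDegree_one_le hd
    have hpow : (3 / 4 : ℝ) ^ k / 2 ≤ (9 / 10) ^ (k + 1) := by
      have : (3 / 4 : ℝ) ^ k ≤ (9 / 10) ^ k := pow_le_pow_left₀ (by norm_num) (by norm_num) k
      rw [pow_succ]
      nlinarith [pow_nonneg (by norm_num : (0 : ℝ) ≤ 9 / 10) k]
    calc _ ≤ (3 / 4) ^ k * (q : ℝ) ^ (k + 1) * (q ^ d / 2) :=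
          mul_le_mul hchoose hT (by positivity) (by positivity)
      _ = (3 / 4) ^ k / 2 * (q : ℝ) ^ (k + 1 + d) := by ring
      _ ≤ (9 / 10) ^ (k + 1) * q ^ (k + 1 + d) := by gcongr

theorem card_filter_numFactorsOfDegree_monics_le_pow {n i : ℕ} (hn : 2 ≤ n) (hi : 1 ≤ i)
    (k : ℕ) :
    (#{f ∈ monics (R := F) n | numFactorsOfDegree i f = k} : ℝ)
      ≤ (9 / 10) ^ k * Fintype.card F ^ n := by
  rcases k with _ | k
  · rw [pow_zero, one_mul]
    exact_mod_cast (card_filter_le _ _).trans_eq (card_monics n)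
  rcases lt_or_ge n (i * (k + 1)) with h | h
  · rw [filter_numFactorsOfDegree_monics_eq_empty h, card_empty, Nat.cast_zero]
    positivity
  obtain ⟨d, rfl⟩ := Nat.exists_eq_add_of_le h
  refine (Nat.cast_le.2 (card_filter_numFactorsOfDegree_monics_le _ i (k + 1))).trans ?_
  rw [Nat.add_sub_cancel_left, Nat.cast_mul]
  rcases hi.eq_or_lt with rfl | hi
  · rw [one_mul] at hn ⊢
    exact multichoose_mul_card_monicsWithoutFactorOfDegree_one_le (by omega)
  · exact (multichoose_mul_card_monicsWithoutFactorOfDegree_le_of_two_le hi k d).trans <|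
      mul_le_mul_of_nonneg_right (pow_le_pow_left₀ (by norm_num) (by norm_num) _) (by positivity)

end FiniteField

end

/-- There is an absolute constant `c > 0` such that for every finite field with `q`
elements, every `n ≥ 2`, every `1 ≤ i ≤ n` and every `λ ≥ 0`, the probability that a
uniformly random monic polynomial of degree `n` has exactly `λ` irreducible factors of
degree `i` (counted with multiplicity) is at most `e^{-cλ}`. -/
theorem stmt8 :
    ∃ c : ℝ, 0 < c ∧
      ∀ (F : Type) (_ : Field F) (_ : Fintype F) (q n i lam : ℕ),
        q = Fintype.card F → 2 ≤ n → 1 ≤ i → i ≤ n →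
        (Nat.card {co : Fin n → F //
            Multiset.card ((UniqueFactorizationMonoid.factors
                (X ^ n + ∑ j : Fin n, C (co j) * X ^ (j : ℕ))).filter
              (fun p => p.natDegree = i)) = lam} : ℝ)
          / (q : ℝ) ^ n ≤ Real.exp (-c * lam) := by
  refine ⟨Real.log (10 / 9), Real.log_pos (by norm_num), ?_⟩
  intro F _ _ q n i lam rfl hn hi _
  have hexp : Real.exp (-Real.log (10 / 9) * lam) = (9 / 10) ^ lam := by
    rw [neg_mul, Real.exp_neg, mul_comm, Real.exp_nat_mul, Real.exp_log (by norm_num), ← inv_pow,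
      inv_div]
  rw [hexp, div_le_iff₀ (by have := Fintype.card_pos (α := F); positivity)]
  calc _ = (Nat.card {c : Fin n → F // numFactorsOfDegree i (monicOfCoeffs n c) = lam} : ℝ) :=
        rfl
    _ = #{f ∈ monics n | numFactorsOfDegree i f = lam} := by
        rw [natCard_subtype_monicOfCoeffs (R := F) n fun f => numFactorsOfDegree i f = lam]
    _ ≤ _ := card_filter_numFactorsOfDegree_monics_le_pow hn hi lam
end

section
/- For every n ≥ 1, every i ∈ {1,...,n} and every nonnegative integer λ, the probability that a uniformly random permutation of {1,...,n} has exactly λ cycles of length i is at most 1/(λ!·i^λ). -/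
/-!
Double counting of pairs `(σ, m)`, where `m : Fin λ × Fin i ↪ Fin n` lists the points of minimal
period `i` of `σ` cycle by cycle, each cycle in the order in which `σ` runs through it. A
permutation with exactly `λ` cycles of length `i` has at least `λ! · i ^ λ` such listings (permute
the cycles, rotate the starting points), while a listing `m` determines `σ` on its range, so at most
`(n - iλ)!` permutations share it. As there are `n! / (n - iλ)!` embeddings, the permutations in
question number at most `n! / (λ! · i ^ λ)`.
-/

open Equiv Function Finset
open scoped Nat

theorem Nat.descFactorial_mul_factorial_sub_le (n k : ℕ) : n.descFactorial k * (n - k)! ≤ n ! := by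
  rcases le_or_gt k n with hk | hk
  · rw [mul_comm, Nat.factorial_mul_descFactorial hk]
  · simp [Nat.descFactorial_eq_zero_iff_lt.mpr hk]

namespace Equiv.Perm

variable {α : Type*}

theorem minimalPeriod_pow_apply [Finite α] (σ : Perm α) (k : ℕ) (x : α) :
    minimalPeriod σ ((σ ^ k) x) = minimalPeriod σ x := by
  rw [← iterate_eq_pow]
  exact minimalPeriod_apply_iterate (σ.injective.mem_periodicPts x) k

theorem pow_mod_minimalPeriod_apply (σ : Perm α) (k : ℕ) (x : α) :
    (σ ^ (k % minimalPeriod σ x)) x = (σ ^ k) x := by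
  simpa only [iterate_eq_pow] using iterate_mod_minimalPeriod_eq (f := σ) (n := k) (x := x)

section CycleWalk

variable [Finite α] (σ : Perm α) (i : ℕ) [NeZero i]

abbrev PeriodicCycle : Type _ :=
  Quotient ((SameCycle.setoid σ).comap ((↑) : {x : α // minimalPeriod σ x = i} → α))

noncomputable def cycleWalk (p : PeriodicCycle σ i × Fin i) : {x : α // minimalPeriod σ x = i} :=
  ⟨(σ ^ (p.2 : ℕ)) p.1.out, (σ.minimalPeriod_pow_apply _ _).trans p.1.out.2⟩

variable {σ i}

theorem cycleWalk_bijective : Bijective (cycleWalk σ i) := by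
  constructor
  · rintro ⟨c, k⟩ ⟨c', k'⟩ h
    have hxy : ((σ ^ (k : ℕ)) c.out : α) = (σ ^ (k' : ℕ)) c'.out := congrArg Subtype.val h
    have hc : c = c' := by
      rw [← Quotient.out_eq c, ← Quotient.out_eq c']
      have : SameCycle σ ((σ ^ (k : ℕ)) c.out) ((σ ^ (k' : ℕ)) c'.out) := hxy ▸ .refl _ _
      exact Quotient.sound (sameCycle_pow_left.mp (sameCycle_pow_right.mp this))
    subst hc
    have hlt : ∀ k : Fin i, (k : ℕ) ∈ Set.Iio (minimalPeriod σ c.out) := fun k => by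
      rw [c.out.2]; exact k.2
    have hk : (k : ℕ) = k' := by
      apply iterate_injOn_Iio_minimalPeriod (hlt k) (hlt k')
      simpa only [iterate_eq_pow] using hxy
    exact Prod.ext rfl (Fin.ext hk)
  · intro y
    obtain ⟨t, -, ht⟩ := (Quotient.mk_out (s := (SameCycle.setoid σ).comap _) y).exists_pow_eq'
    refine ⟨(⟦y⟧, ⟨t % i, Nat.mod_lt _ (NeZero.pos i)⟩), Subtype.ext ?_⟩
    have hmod := pow_mod_minimalPeriod_apply σ t (⟦y⟧ : PeriodicCycle σ i).out
    rw [(⟦y⟧ : PeriodicCycle σ i).out.2] at hmod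
    exact hmod.trans ht

theorem apply_cycleWalk (c : PeriodicCycle σ i) (k : Fin i) :
    σ (cycleWalk σ i (c, k)) = cycleWalk σ i (c, k + 1) := by
  have hmod := pow_mod_minimalPeriod_apply σ (k + 1) c.out
  rw [c.out.2] at hmod
  simp only [cycleWalk, Fin.val_add, Fin.val_one', Nat.add_mod_mod, hmod, pow_succ',
    Perm.mul_apply]

end CycleWalk

section CycleEnumeration

variable {ι : Type*} {i : ℕ} [NeZero i]

def IsCycleEnumeration (σ : Perm α) (m : ι × Fin i ↪ α) : Prop :=
  Set.range m = {x | minimalPeriod σ x = i} ∧ ∀ j k, σ (m (j, k)) = m (j, k + 1)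

theorem exists_isCycleEnumeration [Finite α] {σ : Perm α} {lam : ℕ}
    (h : Nat.card {x : α // minimalPeriod σ x = i} = i * lam) :
    ∃ m : Fin lam × Fin i ↪ α, IsCycleEnumeration σ m := by
  let walk := Equiv.ofBijective _ (cycleWalk_bijective (σ := σ) (i := i))
  have hcycles : Nat.card (PeriodicCycle σ i) = lam := by
    have := Nat.card_congr walk
    rw [Nat.card_prod, Nat.card_fin, h, mul_comm] at this
    exact Nat.eq_of_mul_eq_mul_left (NeZero.pos i) this
  let e := ((Finite.equivFinOfCardEq hcycles).symm.prodCongr (Equiv.refl (Fin i))).trans walk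
  refine ⟨e.toEmbedding.trans (Embedding.subtype _), ?_, fun j k => apply_cycleWalk _ _⟩
  exact (e.surjective.range_comp Subtype.val).trans Subtype.range_coe_subtype

variable {σ : Perm α} {m : ι × Fin i ↪ α}

theorem IsCycleEnumeration.prodShear (hm : IsCycleEnumeration σ m) (τ : Perm ι) (s : ι → Fin i) :
    IsCycleEnumeration σ
      ((Equiv.prodShear τ fun j => Equiv.addRight (s j)).toEmbedding.trans m) := by
  refine ⟨(Equiv.surjective _ |>.range_comp m).trans hm.1, fun j k => ?_⟩
  simp only [Embedding.trans_apply, coe_toEmbedding, prodShear_apply, Equiv.coe_addRight,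
    hm.2, add_right_comm]

theorem IsCycleEnumeration.factorial_mul_pow_le_card [Finite α] [Fintype ι] [DecidableEq ι]
    (hm : IsCycleEnumeration σ m) :
    (Fintype.card ι)! * i ^ Fintype.card ι ≤
      Nat.card {m' : ι × Fin i ↪ α // IsCycleEnumeration σ m'} := by
  have hinj : Injective fun b : Perm ι × (ι → Fin i) =>
      (⟨_, hm.prodShear b.1 b.2⟩ : {m' : ι × Fin i ↪ α // IsCycleEnumeration σ m'}) := by
    rintro ⟨τ, s⟩ ⟨τ', s'⟩ h
    have h0 : ∀ j, (τ j, s j) = (τ' j, s' j) := fun j => by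
      simpa using m.injective (congrArg (fun m' => m'.1 (j, 0)) h)
    exact Prod.ext (Equiv.ext fun j => congrArg Prod.fst (h0 j))
      (funext fun j => congrArg Prod.snd (h0 j))
  simpa [Nat.card_eq_fintype_card, Fintype.card_perm] using Nat.card_le_card_of_injective _ hinj

theorem card_isCycleEnumeration_le_factorial [Fintype α] [Fintype ι] (m : ι × Fin i ↪ α) :
    Nat.card {σ : Perm α // IsCycleEnumeration σ m} ≤ (Fintype.card α - Fintype.card ι * i)! := by
  classical
  have hstable : ∀ σ : {σ : Perm α // IsCycleEnumeration σ m}, ∀ x,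
      σ.1 x ∉ Set.range m ↔ x ∉ Set.range m := fun ⟨σ, hσ⟩ x => by
    simp only [hσ.1, Set.mem_ofPred_eq, minimalPeriod_apply (σ.injective.mem_periodicPts x)]
  have hinj : Injective fun σ : {σ : Perm α // IsCycleEnumeration σ m} =>
      σ.1.subtypePerm (p := (· ∉ Set.range m)) (hstable σ) := by
    rintro ⟨σ, hσ⟩ ⟨τ, hτ⟩ h
    refine Subtype.ext (Equiv.ext fun x => ?_)
    by_cases hx : x ∈ Set.range m
    · obtain ⟨⟨j, k⟩, rfl⟩ := hx
      rw [hσ.2, hτ.2]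
    · exact congrArg Subtype.val (Equiv.ext_iff.mp h ⟨x, hx⟩)
  refine (Nat.card_le_card_of_injective _ hinj).trans_eq ?_
  rw [Nat.card_perm, Nat.card_eq_fintype_card, Fintype.card_subtype_compl,
    Set.card_range_of_injective m.injective, Fintype.card_prod, Fintype.card_fin]

end CycleEnumeration

theorem card_of_card_minimalPeriod_eq_mul_mul_le_factorial [Fintype α] (i lam : ℕ) [NeZero i] :
    Nat.card {σ : Perm α // Nat.card {x // minimalPeriod σ x = i} = i * lam} * (lam ! * i ^ lam)
      ≤ (Fintype.card α)! := by
  classical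
  let perms : Finset (Perm α) := {σ | Nat.card {x // minimalPeriod σ x = i} = i * lam}
  let enums : Finset (Fin lam × Fin i ↪ α) := univ
  have hlower : ∀ σ ∈ perms, lam ! * i ^ lam ≤ #(enums.bipartiteAbove IsCycleEnumeration σ) := by
    intro σ hσ
    obtain ⟨m, hm⟩ := exists_isCycleEnumeration (mem_filter.mp hσ).2
    simpa [bipartiteAbove, Nat.card_eq_fintype_card, Fintype.card_subtype]
      using hm.factorial_mul_pow_le_card
  have hupper : ∀ m ∈ enums,
      #(perms.bipartiteBelow IsCycleEnumeration m) ≤ (Fintype.card α - lam * i)! := by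
    intro m _
    refine (card_le_card (filter_subset_filter _ (subset_univ perms))).trans ?_
    simpa [Nat.card_eq_fintype_card, Fintype.card_subtype]
      using card_isCycleEnumeration_le_factorial m
  calc Nat.card {σ : Perm α // Nat.card {x // minimalPeriod σ x = i} = i * lam} * (lam ! * i ^ lam)
      = #perms * (lam ! * i ^ lam) := by rw [Nat.card_eq_fintype_card, Fintype.card_subtype]
    _ ≤ #enums * (Fintype.card α - lam * i)! := card_mul_le_card_mul _ hlower hupper
    _ = (Fintype.card α).descFactorial (lam * i) * (Fintype.card α - lam * i)! := by
      rw [card_univ, Fintype.card_embedding_eq, Fintype.card_prod, Fintype.card_fin,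
        Fintype.card_fin]
    _ ≤ (Fintype.card α)! := Nat.descFactorial_mul_factorial_sub_le _ _

end Equiv.Perm

theorem stmt9_general (n i lam : ℕ) (hi : 1 ≤ i) :
    (Nat.card {σ : Equiv.Perm (Fin n) //
        Nat.card {x : Fin n // Function.minimalPeriod σ x = i} = i * lam} : ℝ)
      / (Nat.card (Equiv.Perm (Fin n)))
      ≤ 1 / (Nat.factorial lam * (i : ℝ) ^ lam) := by
  have : NeZero i := NeZero.of_pos hi
  have hcount := Equiv.Perm.card_of_card_minimalPeriod_eq_mul_mul_le_factorial (α := Fin n) i lam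
  rw [Fintype.card_fin] at hcount
  rw [Nat.card_perm, Nat.card_fin, div_le_div_iff₀ (by positivity) (by positivity), one_mul]
  exact_mod_cast hcount

/-- For every `n ≥ 1`, `1 ≤ i ≤ n` and `λ ≥ 0`, the probability that a uniformly random
permutation of `{1,...,n}` has exactly `λ` cycles of length `i` is at most `1/(λ!·i^λ)`.
Having exactly `λ` cycles of length `i` means exactly `i·λ` points have minimal period `i`. -/
theorem stmt9 (n i lam : ℕ) (hn : 1 ≤ n) (hi : 1 ≤ i) (hin : i ≤ n) :
    (Nat.card {σ : Equiv.Perm (Fin n) //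
        Nat.card {x : Fin n // Function.minimalPeriod σ x = i} = i * lam} : ℝ)
      / (Nat.card (Equiv.Perm (Fin n)))
      ≤ 1 / (Nat.factorial lam * (i : ℝ) ^ lam) :=
  stmt9_general n i lam hi
end

section
/- For every n ≥ 1 and 1 ≤ x ≤ n, the sum over all tuples (m₁,...,mₙ) of nonnegative integers with x ≤ Σᵢ i·mᵢ ≤ n of ∏ᵢ 1/(mᵢ!·i^{mᵢ}) equals n - x + 1. -/
/-!
Write `z(m) = ∏ m_i! i^{m_i}`, so that `k! / z(m)` counts the permutations of `k` letters with
`m_i` cycles of length `i`; hence `S_k = ∑_{∑ i m_i = k} 1 / z(m) = 1` for every `k ≤ n`.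
Instead of counting permutations we prove this from the recurrence `k S_k = ∑_{i=1}^k S_{k-i}`:
expand `k = ∑ i m_i`, and note that `m ↦ m + e_i` turns the term `i m_i / z(m)` of weight `k`
into the term `1 / z(m - e_i)` of weight `k - i`. The sum in the theorem is then
`∑_{k=x}^n S_k = n - x + 1`.
-/

open Finset

namespace CycleTypeTuple

variable {N : ℕ}

/-- Entry `i : Fin N` of a tuple counts cycles of length `i + 1`. -/
def weight (m : Fin N → ℕ) : ℕ := ∑ i : Fin N, ((i : ℕ) + 1) * m i

noncomputable def invCentralizerCard (m : Fin N → ℕ) : ℝ :=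
  ∏ i : Fin N, (1 : ℝ) / (Nat.factorial (m i) * ((i : ℕ) + 1) ^ m i)

def ofWeight (N k : ℕ) : Finset (Fin N → ℕ) :=
  (Fintype.piFinset fun _ : Fin N => range (k + 1)).filter (weight · = k)

lemma mul_apply_le_weight (m : Fin N → ℕ) (i : Fin N) : ((i : ℕ) + 1) * m i ≤ weight m :=
  single_le_sum (f := fun j : Fin N => ((j : ℕ) + 1) * m j) (fun _ _ => Nat.zero_le _)
    (mem_univ i)

lemma apply_le_weight (m : Fin N → ℕ) (i : Fin N) : m i ≤ weight m :=
  (Nat.le_mul_of_pos_left _ i.val.succ_pos).trans (mul_apply_le_weight m i)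

lemma mem_piFinset_of_weight_le {m : Fin N → ℕ} {B : ℕ} (h : weight m ≤ B) :
    m ∈ Fintype.piFinset fun _ : Fin N => range (B + 1) :=
  Fintype.mem_piFinset.mpr fun i =>
    mem_range.mpr (Nat.lt_succ_of_le ((apply_le_weight m i).trans h))

@[simp]
lemma mem_ofWeight {k : ℕ} {m : Fin N → ℕ} : m ∈ ofWeight N k ↔ weight m = k :=
  ⟨fun h => (mem_filter.mp h).2, fun h => mem_filter.mpr ⟨mem_piFinset_of_weight_le h.le, h⟩⟩

lemma ofWeight_zero : ofWeight N 0 = {0} := by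
  ext m
  simp only [mem_ofWeight, mem_singleton]
  refine ⟨fun h => funext fun i => Nat.le_zero.mp (h ▸ apply_le_weight m i), ?_⟩
  rintro rfl
  simp [weight]

lemma weight_add_single (m : Fin N → ℕ) (i : Fin N) :
    weight (m + Pi.single i 1) = weight m + ((i : ℕ) + 1) := by
  simp only [weight, Pi.add_apply, mul_add, sum_add_distrib]
  congr 1
  rw [Fintype.sum_eq_single i fun j hj => by simp [hj]]
  simp

lemma invCentralizerCard_add_single (m : Fin N → ℕ) (i : Fin N) :
    ((((i : ℕ) + 1) * (m i + 1) : ℕ) : ℝ) * invCentralizerCard (m + Pi.single i 1) =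
      invCentralizerCard m := by
  have hcompl : ∀ j ∈ ({i}ᶜ : Finset (Fin N)), (m + Pi.single i 1 : Fin N → ℕ) j = m j :=
    fun j hj => by simp [(by simpa using hj : j ≠ i)]
  rw [invCentralizerCard, invCentralizerCard, Fintype.prod_eq_mul_prod_compl i,
    Fintype.prod_eq_mul_prod_compl i, prod_congr rfl fun j hj => by rw [hcompl j hj], ← mul_assoc]
  congr 1
  simp only [Pi.add_apply, Pi.single_eq_same, Nat.factorial_succ, pow_succ]
  push_cast
  field_simp

lemma sub_single_add_single {m : Fin N → ℕ} {i : Fin N} (hmi : m i ≠ 0) :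
    m - Pi.single i 1 + Pi.single i 1 = m :=
  tsub_add_cancel_of_le fun j => by
    by_cases hj : j = i <;> simp [hj, Nat.one_le_iff_ne_zero.mpr hmi]

lemma sum_mul_invCentralizerCard_ofWeight {k : ℕ} (i : Fin N) (hi : (i : ℕ) + 1 ≤ k) :
    ∑ m ∈ ofWeight N k, ((((i : ℕ) + 1) * m i : ℕ) : ℝ) * invCentralizerCard m =
      ∑ m ∈ ofWeight N (k - ((i : ℕ) + 1)), invCentralizerCard m := by
  rw [← sum_filter_of_ne (p := fun m => m i ≠ 0) fun m _ hne h0 => hne (by simp [h0])]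
  refine sum_nbij' (fun m => m - Pi.single i 1) (fun m => m + Pi.single i 1) ?_ ?_ ?_ ?_ ?_
  · intro m hm
    obtain ⟨hwt, hmi⟩ : weight m = k ∧ m i ≠ 0 := by simpa using hm
    have := weight_add_single (m - Pi.single i 1) i
    rw [sub_single_add_single hmi] at this
    rw [mem_ofWeight]
    omega
  · intro m hm
    rw [mem_ofWeight] at hm
    simp only [mem_filter, mem_ofWeight, weight_add_single, hm]
    exact ⟨by omega, by simp⟩
  · intro m hm
    exact sub_single_add_single (mem_filter.mp hm).2
  · intro m _
    simp
  · intro m hm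
    have hmi : m i ≠ 0 := (mem_filter.mp hm).2
    rw [← invCentralizerCard_add_single (m - Pi.single i 1) i, sub_single_add_single hmi]
    simp only [Pi.sub_apply, Pi.single_eq_same,
      Nat.sub_add_cancel (Nat.one_le_iff_ne_zero.mpr hmi)]

lemma sum_mul_invCentralizerCard_ofWeight_eq_zero {k : ℕ} (i : Fin N) (hi : k < (i : ℕ) + 1) :
    ∑ m ∈ ofWeight N k, ((((i : ℕ) + 1) * m i : ℕ) : ℝ) * invCentralizerCard m = 0 :=
  sum_eq_zero fun m hm => by
    have h := mul_apply_le_weight m i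
    rw [mem_ofWeight.mp hm] at h
    have : m i = 0 := by nlinarith
    simp [this]

theorem sum_invCentralizerCard_ofWeight {k : ℕ} (hk : k ≤ N) :
    ∑ m ∈ ofWeight N k, invCentralizerCard m = 1 := by
  induction k using Nat.strong_induction_on with
  | _ k ih =>
  rcases Nat.eq_zero_or_pos k with rfl | hk0
  · simp [ofWeight_zero, invCentralizerCard]
  have recurrence : (k : ℝ) * ∑ m ∈ ofWeight N k, invCentralizerCard m = k :=
    calc (k : ℝ) * ∑ m ∈ ofWeight N k, invCentralizerCard m
        = ∑ m ∈ ofWeight N k, ∑ i : Fin N,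
            ((((i : ℕ) + 1) * m i : ℕ) : ℝ) * invCentralizerCard m := by
          rw [mul_sum]
          refine sum_congr rfl fun m hm => ?_
          rw [← sum_mul, ← Nat.cast_sum, ← weight, mem_ofWeight.mp hm]
      _ = ∑ i : Fin N, if (i : ℕ) + 1 ≤ k then (1 : ℝ) else 0 := by
          rw [sum_comm]
          refine sum_congr rfl fun i _ => ?_
          split_ifs with hi
          · rw [sum_mul_invCentralizerCard_ofWeight i hi, ih _ (by omega) (by omega)]
          · exact sum_mul_invCentralizerCard_ofWeight_eq_zero i (by omega)
      _ = k := by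
          rw [Fin.sum_univ_eq_sum_range (fun j => if j + 1 ≤ k then (1 : ℝ) else 0), ← sum_filter,
            show (range N).filter (· + 1 ≤ k) = range k by ext j; simp; omega]
          simp
  exact mul_left_cancel₀ (Nat.cast_ne_zero.mpr hk0.ne') (recurrence.trans (mul_one _).symm)

lemma filter_weight_eq_ofWeight {B k : ℕ} (hk : k ≤ B) (P : (Fin N → ℕ) → Prop) [DecidablePred P]
    (hP : ∀ m, weight m = k → P m) :
    ((Fintype.piFinset fun _ : Fin N => range (B + 1)).filter P).filter (weight · = k) =
      ofWeight N k := by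
  ext m
  simp only [mem_filter, mem_ofWeight]
  exact ⟨fun h => h.2, fun h => ⟨⟨mem_piFinset_of_weight_le (h.trans_le hk), hP m h⟩, h⟩⟩

end CycleTypeTuple

open CycleTypeTuple in
theorem stmt11_general (n x : ℕ) (hxn : x ≤ n) :
    ∑ m ∈ (Fintype.piFinset fun _ : Fin n => Finset.range (n + 1)).filter
        (fun m => x ≤ ∑ i : Fin n, ((i : ℕ) + 1) * m i ∧
          ∑ i : Fin n, ((i : ℕ) + 1) * m i ≤ n),
      ∏ i : Fin n, (1 : ℝ) / (Nat.factorial (m i) * ((i : ℕ) + 1) ^ m i)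
      = (n : ℝ) - x + 1 := by
  change ∑ m ∈ (Fintype.piFinset fun _ : Fin n => range (n + 1)).filter
      (fun m => x ≤ weight m ∧ weight m ≤ n), invCentralizerCard m = _
  rw [← sum_fiberwise_of_maps_to (t := Icc x n) fun m hm => mem_Icc.mpr (mem_filter.mp hm).2]
  rw [sum_congr rfl fun k hk => by
    obtain ⟨hxk, hkn⟩ := mem_Icc.mp hk
    rw [filter_weight_eq_ofWeight hkn _ fun m hm => ⟨hm ▸ hxk, hm ▸ hkn⟩,
      sum_invCentralizerCard_ofWeight hkn]]
  rw [sum_const, Nat.card_Icc, nsmul_one, Nat.cast_sub (hxn.trans n.le_succ)]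
  push_cast
  ring

/-- For every `n ≥ 1` and `1 ≤ x ≤ n`, the sum over all tuples `(m₁,...,mₙ)` of
nonnegative integers with `x ≤ ∑ i·mᵢ ≤ n` of `∏ 1/(mᵢ!·i^{mᵢ})` equals `n - x + 1`.
(Encoding as in the companion statement: `m : Fin n → ℕ`, index `i` stands for `i+1`;
the constraint forces all entries to be `≤ n`.) -/
theorem stmt11 (n x : ℕ) (hx : 1 ≤ x) (hxn : x ≤ n) :
    ∑ m ∈ (Fintype.piFinset fun _ : Fin n => Finset.range (n + 1)).filter
        (fun m => x ≤ ∑ i : Fin n, ((i : ℕ) + 1) * m i ∧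
          ∑ i : Fin n, ((i : ℕ) + 1) * m i ≤ n),
      ∏ i : Fin n, (1 : ℝ) / (Nat.factorial (m i) * ((i : ℕ) + 1) ^ m i)
      = (n : ℝ) - x + 1 :=
  stmt11_general n x hxn
end

section
/- Let G ≤ Sₙ be a doubly transitive permutation group with Aₙ ⊄ G. Then every nonidentity element of G moves at least n/4 points. -/
/-!
Let `g ≠ 1` be an element of `G` with smallest support `S`, `m = |S|`. If `m ≤ 3`, then `g` is a
transposition or a 3-cycle, and Jordan's theorem for primitive groups gives `Aₙ ≤ G`.

Otherwise fix `a ∈ S`, put `b = g a`, and consider the `x ∈ G` with `x a = a` and `x b ∉ S`. The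
commutator of `g` with `h = x g x⁻¹` is a nonidentity element of `G` (`h a ∉ S` is fixed by `g`)
supported in `E ∪ gE ∪ hE`, where `E = S ∩ x(S)`. Hence `m ≤ 3|E|`, and `m ≤ 3|E| - 1` if `b ∈ E`:
every such `x` maps many points of `S` back into `S`. By double transitivity, all fibres
`{x ∈ G | x a = a, x s = t}` with `s, t ≠ a` have the same size, so counting the pairs `(x, s)` with
`x s ∈ S` in two ways shows that, when `n > 4m`, there are too many such `x` (the cases `m ≤ 5` and
`m ≥ 6` use different linear consequences of the bound on `m`).
-/

open Equiv Finset MulAction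
open scoped commutatorElement

namespace Equiv.Perm

theorem commutatorElement_conj_ne_one {α : Type*} {g x : Perm α} {a : α} (ha : g a ≠ a)
    (hxa : x a = a) (hxga : g (x (g a)) = x (g a)) : ⁅g, x * g * x⁻¹⁆ ≠ 1 := by
  set h := x * g * x⁻¹
  have hha : h a = x (g a) := by
    rw [Perm.mul_apply, Perm.mul_apply, inv_eq_iff_eq.mpr hxa.symm]
  rw [Ne, commutatorElement_eq_one_iff_mul_comm]
  intro hgh
  have : h (g a) = h a := by rw [← Perm.mul_apply, ← hgh, Perm.mul_apply, hha, hxga]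
  exact ha (h.injective this)

variable {α : Type*} [Fintype α] [DecidableEq α]

theorem support_commutatorElement_subset (g h : Perm α) :
    ⁅g, h⁆.support ⊆ (g.support ∩ h.support) ∪ (g.support ∩ h.support).image g ∪
      (g.support ∩ h.support).image h := by
  intro x hx
  rw [mem_support, commutatorElement_def] at hx
  simp only [mem_union, mem_inter, mem_image, mem_support]
  by_cases hhx : h x = x
  · have hx' : g (h (g⁻¹ x)) ≠ x := by
      rwa [Perm.mul_apply, Perm.mul_apply, Perm.mul_apply, inv_eq_iff_eq.mpr hhx.symm] at hx
    refine .inl (.inr ⟨g⁻¹ x, ⟨fun hg => ?_, fun hh => ?_⟩, g.apply_symm_apply x⟩)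
    · have hgx : g⁻¹ x = x := by simpa using hg.symm
      exact hx' (by rw [hgx, hhx, ← inv_eq_iff_eq.mp hgx])
    · exact hx' (by rw [hh]; exact g.apply_symm_apply x)
  · by_cases hgx : g x = x
    · have hx' : g (h (g⁻¹ (h⁻¹ x))) ≠ x := hx
      refine .inr ⟨h⁻¹ x, ⟨fun hg => ?_, fun hh => ?_⟩, h.apply_symm_apply x⟩
      · exact hx' (by rw [inv_eq_iff_eq.mpr hg.symm]; simp [hgx])
      · have hhx' : h⁻¹ x = x := by simpa using hh.symm
        exact hhx (inv_eq_iff_eq.mp hhx').symm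
    · exact .inl (.inl ⟨hgx, hhx⟩)

theorem card_support_commutatorElement_add_le (g h : Perm α) :
    #⁅g, h⁆.support + #((g.support ∩ h.support) ∩ (g.support ∩ h.support).image g) ≤
      3 * #(g.support ∩ h.support) := by
  set E := g.support ∩ h.support
  calc #⁅g, h⁆.support + #(E ∩ E.image g)
      ≤ #(E ∪ E.image g ∪ E.image h) + #(E ∩ E.image g) := by
        gcongr; exact support_commutatorElement_subset g h
    _ ≤ #(E ∪ E.image g) + #(E ∩ E.image g) + #(E.image h) := by
        have := card_union_le (E ∪ E.image g) (E.image h); omega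
    _ ≤ 3 * #E := by
        rw [card_union_add_card_inter]
        have := card_image_le (s := E) (f := g)
        have := card_image_le (s := E) (f := h)
        omega

theorem card_support_inter_support_conj (g x : Perm α) :
    #(g.support ∩ (x * g * x⁻¹).support) = #{s ∈ g.support | x s ∈ g.support} := by
  rw [support_conj, inter_comm, ← filter_mem_eq_inter, filter_map, card_map]
  rfl

theorem card_filter_apply_mem_support {g x : Perm α} {a : α} (ha : a ∈ g.support)
    (hxa : x a = a) (hxga : x (g a) ∉ g.support) :
    #{s ∈ g.support | x s ∈ g.support} =
      1 + #{s ∈ (g.support.erase a).erase (g a) | x s ∈ g.support.erase (g a)} +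
        #{s ∈ (g.support.erase a).erase (g a) | x s = g a} := by
  set S := g.support
  set S₂ := (S.erase a).erase (g a)
  have hga : g a ∈ S := apply_mem_support.mpr ha
  have hsplit : {s ∈ S | x s ∈ S} =
      insert a ({s ∈ S₂ | x s ∈ S.erase (g a)} ∪ {s ∈ S₂ | x s = g a}) := by
    ext s
    simp only [mem_filter, mem_insert, mem_union, mem_erase, S₂]
    constructor
    · rintro ⟨hs, hxs⟩
      by_cases hsa : s = a
      · exact .inl hsa
      have hsga : s ≠ g a := by rintro rfl; exact hxga hxs
      by_cases hxsg : x s = g a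
      exacts [.inr (.inr ⟨⟨hsga, hsa, hs⟩, hxsg⟩), .inr (.inl ⟨⟨hsga, hsa, hs⟩, hxsg, hxs⟩)]
    · rintro (rfl | ⟨⟨-, -, hs⟩, -, hxs⟩ | ⟨⟨-, -, hs⟩, hxs⟩)
      exacts [⟨ha, by rwa [hxa]⟩, ⟨hs, hxs⟩, ⟨hs, by rwa [hxs]⟩]
  rw [hsplit, card_insert_of_notMem (by simp [S₂]),
    card_union_of_disjoint (disjoint_filter.mpr fun s _ hs => (mem_erase.mp hs).1)]
  ring

end Equiv.Perm

namespace Subgroup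

variable {α : Type*} [Fintype α] [DecidableEq α] {G : Subgroup (Perm α)}

theorem alternatingGroup_le_of_card_support_le_three [IsMultiplyPretransitive G α 2]
    {g : Perm α} (hg : g ∈ G) (hg1 : g ≠ 1) (h3 : #g.support ≤ 3) : alternatingGroup α ≤ G := by
  have hG := isPreprimitive_of_is_two_pretransitive (G := G) (α := α) ‹_›
  have h0 : #g.support ≠ 0 := by simpa using hg1
  rcases (by have := g.card_support_ne_one; omega : #g.support = 2 ∨ #g.support = 3) with h | h
  · exact (Perm.subgroup_eq_top_of_isPreprimitive_of_isSwap_mem hG g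
      (Perm.card_support_eq_two.mp h) hg) ▸ le_top
  · exact Perm.alternatingGroup_le_of_isPreprimitive_of_isThreeCycle_mem hG
      (card_support_eq_three_iff.mp h) hg

open Perm in
theorem card_support_le_of_minimal {g x : Perm α} (hg : g ∈ G)
    (hmin : ∀ y ∈ G, y ≠ 1 → #g.support ≤ #y.support) {a : α} (ha : a ∈ g.support) (hx : x ∈ G)
    (hxa : x a = a) (hxga : x (g a) ∉ g.support) :
    #g.support ≤ 3 + 3 * #{s ∈ (g.support.erase a).erase (g a) | x s ∈ g.support.erase (g a)} +
      2 * #{s ∈ (g.support.erase a).erase (g a) | x s = g a} := by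
  have hE := card_filter_apply_mem_support ha hxa hxga
  rw [← card_support_inter_support_conj] at hE
  set S := g.support
  set h := x * g * x⁻¹
  set E := S ∩ h.support
  have hh : h ∈ G := G.mul_mem (G.mul_mem hx hg) (G.inv_mem hx)
  have hcomm : #S ≤ #⁅g, h⁆.support :=
    hmin _ (G.mul_mem (G.mul_mem (G.mul_mem hg hh) (G.inv_mem hg)) (G.inv_mem hh))
      (commutatorElement_conj_ne_one (mem_support.mp ha) hxa (notMem_support.mp hxga))
  have hj : #{s ∈ (S.erase a).erase (g a) | x s = g a} ≤ #(E ∩ E.image g) := by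
    rcases eq_empty_or_nonempty {s ∈ (S.erase a).erase (g a) | x s = g a} with h0 | ⟨s, hs⟩
    · simp [h0]
    calc _ ≤ 1 := card_le_one.mpr fun s₁ h₁ s₂ h₂ =>
            x.injective ((mem_filter.mp h₁).2.trans (mem_filter.mp h₂).2.symm)
      _ ≤ _ := card_pos.mpr ⟨g a, ?_⟩
    obtain ⟨hs₂, hxs⟩ := mem_filter.mp hs
    simp only [E, h, support_conj, mem_inter, mem_image, Finset.mem_map, Equiv.coe_toEmbedding]
    exact ⟨⟨apply_mem_support.mpr ha, s, mem_of_mem_erase (mem_of_mem_erase hs₂), hxs⟩,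
      a, ⟨ha, a, ha, hxa⟩, rfl⟩
  have key : #⁅g, h⁆.support + #(E ∩ E.image g) ≤ 3 * #E :=
    card_support_commutatorElement_add_le g h
  omega

section Stabilizer

variable (G) [DecidablePred (· ∈ G)]

def stabilizerFinset (a : α) : Finset (Perm α) := {x | x ∈ G ∧ x a = a}

variable {G}

theorem mem_stabilizerFinset {a : α} {x : Perm α} :
    x ∈ G.stabilizerFinset a ↔ x ∈ G ∧ x a = a := by
  simp [stabilizerFinset]

variable [IsMultiplyPretransitive G α 2]

theorem card_filter_stabilizerFinset_apply_eq {a b c b' c' : α} (hb : b ≠ a) (hc : c ≠ a)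
    (hb' : b' ≠ a) (hc' : c' ≠ a) :
    #{x ∈ G.stabilizerFinset a | x b = c} = #{x ∈ G.stabilizerFinset a | x b' = c'} := by
  obtain ⟨⟨σ, hσ⟩, hσa, hσc⟩ := is_two_pretransitive_iff.mp ‹_› hc.symm hc'.symm
  obtain ⟨⟨τ, hτ⟩, hτa, hτb⟩ := is_two_pretransitive_iff.mp ‹_› hb'.symm hb.symm
  simp only [Subgroup.mk_smul, Perm.smul_def] at hσa hσc hτa hτb
  refine card_bij' (fun x _ => σ * x * τ) (fun y _ => σ⁻¹ * y * τ⁻¹) ?_ ?_ ?_ ?_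
  · intro x hx
    simp only [mem_filter, mem_stabilizerFinset, Perm.mul_apply] at hx ⊢
    exact ⟨⟨G.mul_mem (G.mul_mem hσ hx.1.1) hτ, by rw [hτa, hx.1.2, hσa]⟩, by rw [hτb, hx.2, hσc]⟩
  · intro y hy
    simp only [mem_filter, mem_stabilizerFinset, Perm.mul_apply] at hy ⊢
    refine ⟨⟨G.mul_mem (G.mul_mem (G.inv_mem hσ) hy.1.1) (G.inv_mem hτ), ?_⟩, ?_⟩
    · rw [Perm.inv_eq_iff_eq.mpr hτa.symm, hy.1.2, Perm.inv_eq_iff_eq.mpr hσa.symm]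
    · rw [Perm.inv_eq_iff_eq.mpr hτb.symm, hy.2, Perm.inv_eq_iff_eq.mpr hσc.symm]
  · intro x _; group
  · intro y _; group

theorem card_filter_stabilizerFinset_apply_mem {a b s : α} (hb : b ≠ a) (hs : s ≠ a)
    (T : Finset α) :
    #{x ∈ G.stabilizerFinset a | x s ∈ T} =
      #{x ∈ G.stabilizerFinset a | x b = b} * #(T.erase a) := by
  rw [card_eq_sum_card_fiberwise (f := fun x => x s) (t := T.erase a), mul_comm, ← smul_eq_mul,
    ← sum_const]
  · refine sum_congr rfl fun t ht => ?_
    rw [filter_filter, ← card_filter_stabilizerFinset_apply_eq hs (ne_of_mem_erase ht) hb hb]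
    congr 1
    refine filter_congr fun x _ => ⟨fun h => h.2, ?_⟩
    rintro rfl
    exact ⟨mem_of_mem_erase ht, rfl⟩
  · intro x hx
    simp only [coe_filter, Set.mem_ofPred_eq, mem_stabilizerFinset] at hx
    exact mem_erase.mpr ⟨fun h => hs (x.injective (h.trans hx.1.2.symm)), hx.2⟩

theorem sum_card_filter_stabilizerFinset_apply_mem {a b : α} (hb : b ≠ a) {S : Finset α}
    (ha : a ∉ S) (T : Finset α) :
    ∑ x ∈ G.stabilizerFinset a, #{s ∈ S | x s ∈ T} =
      #S * (#{x ∈ G.stabilizerFinset a | x b = b} * #(T.erase a)) := by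
  rw [← smul_eq_mul, ← sum_const]
  exact (sum_card_bipartiteAbove_eq_sum_card_bipartiteBelow (fun (x : Perm α) s => x s ∈ T)).trans
    (sum_congr rfl fun s hs =>
      card_filter_stabilizerFinset_apply_mem hb (ne_of_mem_of_not_mem hs ha) T)

open Perm in
theorem mul_card_filter_stabilizerFinset_le_of_minimal {g : Perm α} (hg : g ∈ G)
    (hmin : ∀ y ∈ G, y ≠ 1 → #g.support ≤ #y.support) {a : α} (ha : a ∈ g.support)
    (u v c : ℕ) (huv : ∀ k l, #g.support ≤ 3 + 3 * k + 2 * l → c ≤ u * k + v * l) :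
    c * #{x ∈ G.stabilizerFinset a | x (g a) ∉ g.support} ≤
      (#g.support - 2) * (#{x ∈ G.stabilizerFinset a | x (g a) = g a} *
        (u * (#g.support - 2) + v)) := by
  set S := g.support
  set W := #{x ∈ G.stabilizerFinset a | x (g a) = g a}
  have hga : g a ∈ S := apply_mem_support.mpr ha
  have hga_ne : g a ≠ a := mem_support.mp ha
  set S₂ := (S.erase a).erase (g a)
  have hS₂ : #S₂ = #S - 2 := by
    rw [card_erase_of_mem (mem_erase.mpr ⟨hga_ne, hga⟩), card_erase_of_mem ha]; rfl
  have haS₂ : a ∉ S₂ := by simp [S₂]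
  set d := fun x : Perm α => #{s ∈ S₂ | x s ∈ S.erase (g a)}
  set j := fun x : Perm α => #{s ∈ S₂ | x s ∈ ({g a} : Finset α)}
  have hd : ∑ x ∈ G.stabilizerFinset a, d x = #S₂ * (W * (#S - 2)) := by
    rw [sum_card_filter_stabilizerFinset_apply_mem hga_ne haS₂, erase_right_comm, ← hS₂]
  have hj : ∑ x ∈ G.stabilizerFinset a, j x = #S₂ * W := by
    rw [sum_card_filter_stabilizerFinset_apply_mem hga_ne haS₂,
      erase_eq_of_notMem (notMem_singleton.mpr hga_ne.symm), card_singleton, mul_one]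
  set Y := {x ∈ G.stabilizerFinset a | x (g a) ∉ S}
  have hpoint : ∀ x ∈ Y, c ≤ u * d x + v * j x := by
    intro x hx
    simp only [Y, mem_filter, mem_stabilizerFinset] at hx
    refine huv _ _ ?_
    simpa only [d, j, mem_singleton] using card_support_le_of_minimal hg hmin ha hx.1.1 hx.1.2 hx.2
  calc c * #Y = ∑ x ∈ Y, c := by rw [sum_const, smul_eq_mul, mul_comm]
    _ ≤ ∑ x ∈ Y, (u * d x + v * j x) := sum_le_sum hpoint
    _ ≤ ∑ x ∈ G.stabilizerFinset a, (u * d x + v * j x) := sum_le_sum_of_subset (filter_subset _ _)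
    _ = (#S - 2) * (W * (u * (#S - 2) + v)) := by
      rw [sum_add_distrib, ← mul_sum, ← mul_sum, hd, hj, hS₂]; ring

open Perm in
theorem card_le_four_mul_card_support_of_minimal {g : Perm α} (hg : g ∈ G)
    (hmin : ∀ y ∈ G, y ≠ 1 → #g.support ≤ #y.support) (h4 : 4 ≤ #g.support) :
    Fintype.card α ≤ 4 * #g.support := by
  by_contra! hn
  obtain ⟨a, ha⟩ : g.support.Nonempty := card_pos.mp (by omega)
  have hW : 1 ≤ #{x ∈ G.stabilizerFinset a | x (g a) = g a} :=
    card_pos.mpr ⟨1, by simp [mem_stabilizerFinset, G.one_mem]⟩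
  have hY : #{x ∈ G.stabilizerFinset a | x (g a) ∉ g.support} =
      #{x ∈ G.stabilizerFinset a | x (g a) = g a} * (Fintype.card α - #g.support) := by
    simp_rw [← mem_compl]
    rw [card_filter_stabilizerFinset_apply_mem (mem_support.mp ha) (mem_support.mp ha),
      erase_eq_of_notMem (notMem_compl.mpr ha), card_compl]
  have hp : 3 * #g.support + 1 ≤ Fintype.card α - #g.support := by omega
  rcases le_or_gt 6 #g.support with h6 | h5
  · have := mul_card_filter_stabilizerFinset_le_of_minimal hg hmin ha 3 2 (#g.support - 3)
      fun k l h => by omega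
    rw [hY] at this
    -- with `m = k + 6` and `p = n - m ≥ 3m + 1`: `(m - 3) p ≥ (m - 3)(3m + 1) > (m - 2)(3m - 4)`
    obtain ⟨k, hk⟩ : ∃ k, #g.support = k + 6 := ⟨#g.support - 6, by omega⟩
    rw [hk, show k + 6 - 3 = k + 3 by omega, show k + 6 - 2 = k + 4 by omega] at this
    rw [hk] at hp
    generalize #{x ∈ G.stabilizerFinset a | x (g a) = g a} = W at hW this
    generalize Fintype.card α - (k + 6) = p at hp this
    nlinarith [Nat.mul_le_mul_left ((k + 3) * W) hp]
  · have := mul_card_filter_stabilizerFinset_le_of_minimal hg hmin ha 1 1 1 fun k l h => by omega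
    rw [hY] at this
    generalize #{x ∈ G.stabilizerFinset a | x (g a) = g a} = W at hW this
    interval_cases h : #g.support <;> nlinarith

end Stabilizer

theorem card_le_four_mul_card_support [IsMultiplyPretransitive G α 2]
    (hA : ¬ alternatingGroup α ≤ G) {g : Perm α} (hg : g ∈ G) (hg1 : g ≠ 1) :
    Fintype.card α ≤ 4 * #g.support := by
  classical
  obtain ⟨g₀, hg₀, hmin⟩ := exists_min_image {y : Perm α | y ∈ G ∧ y ≠ 1} (fun y => #y.support)
    ⟨g, by simp [hg, hg1]⟩
  simp only [mem_filter, mem_univ, true_and] at hg₀ hmin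
  have hle : #g₀.support ≤ #g.support := hmin g ⟨hg, hg1⟩
  by_cases h3 : #g₀.support ≤ 3
  · exact absurd (alternatingGroup_le_of_card_support_le_three hg₀.1 hg₀.2 h3) hA
  · exact (card_le_four_mul_card_support_of_minimal hg₀.1 (fun y hy hy1 => hmin y ⟨hy, hy1⟩)
      (by omega)).trans (by omega)

end Subgroup

/-- If `G ≤ Sₙ` is doubly transitive and does not contain the alternating group, then
every nonidentity element of `G` moves at least `n/4` points. -/
theorem stmt14 (n : ℕ) (G : Subgroup (Equiv.Perm (Fin n)))
    (h2trans : ∀ a b c d : Fin n, a ≠ b → c ≠ d →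
      ∃ σ ∈ G, σ a = c ∧ σ b = d)
    (hA : ¬ alternatingGroup (Fin n) ≤ G) :
    ∀ g ∈ G, g ≠ 1 → (n : ℝ) / 4 ≤ (g.support.card : ℝ) := by
  intro g hg hg1
  have : IsMultiplyPretransitive G (Fin n) 2 := is_two_pretransitive_iff.mpr fun hab hcd => by
    obtain ⟨σ, hσ, hσa, hσb⟩ := h2trans _ _ _ _ hab hcd
    exact ⟨⟨σ, hσ⟩, hσa, hσb⟩
  have hn := G.card_le_four_mul_card_support hA hg hg1
  rw [Fintype.card_fin] at hn
  rw [div_le_iff₀ (by norm_num)]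
  exact_mod_cast (by omega : n ≤ #g.support * 4)
end

section
/- For every odd n ≥ 1 and every polynomial f(x) = xⁿ + Σ_{i=0}^{n-1} εᵢ xⁱ with each εᵢ ∈ {1, −1}, the discriminant of f is divisible by 2^{n−1}. -/
/-!
The discriminant is `det (Vᵀ V)` for the Vandermonde matrix `V` of the roots, i.e. the
determinant of the Hankel matrix `(p_{i+j})` of power sums `p_k = Σ αᵢᵏ`. Newton's identities
express the `p_k` as integers through the coefficients of `f`, and reducing them modulo 2, where
`f ≡ 1 + x + ⋯ + xⁿ`, shows that every `p_k` is odd (`n` being odd). An integer matrix whose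
entries are all odd becomes, after subtracting its first row from the others, a matrix with
`n - 1` even rows, so its determinant is divisible by `2^{n-1}`.
-/

open Finset Matrix Polynomial

/-- The `k`-th power sum of `n` numbers whose elementary symmetric functions are `e`, computed by
Newton's identities. -/
def newtonPowerSum (n : ℕ) (e : ℕ → ℤ) : ℕ → ℤ
  | 0 => n
  | k + 1 => (-1) ^ k * (k + 1) * e (k + 1) -
      ∑ a : Fin k, (-1) ^ (a + 1 : ℕ) * e (a + 1) * newtonPowerSum n e (k - a)

theorem odd_newtonPowerSum {n : ℕ} (hn : Odd n) {e : ℕ → ℤ}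
    (he : ∀ a, Odd (e (a + 1)) ↔ a < n) (k : ℕ) : Odd (newtonPowerSum n e k) := by
  have he₂ : ∀ a, (e (a + 1) : ZMod 2) = if a < n then 1 else 0 := fun a ↦ by
    split_ifs with ha
    · exact ZMod.intCast_eq_one_iff_odd.2 ((he a).2 ha)
    · exact ZMod.intCast_eq_zero_iff_even.2 (Int.not_odd_iff_even.1 (mt (he a).1 ha))
  rw [← ZMod.intCast_eq_one_iff_odd]
  induction k using Nat.strong_induction_on with
  | _ k ih =>
    cases k with
    | zero => simpa [newtonPowerSum] using ZMod.natCast_eq_one_iff_odd.2 hn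
    | succ k =>
      -- modulo 2 the recurrence reads `p (k + 1) = (k + 1) [k < n] + min k n`
      have hsum : ∑ a : Fin k, (if (a : ℕ) < n then (1 : ZMod 2) else 0) = (min k n : ℕ) := by
        rw [Fin.sum_univ_eq_sum_range (fun a ↦ if a < n then (1 : ZMod 2) else 0), sum_boole,
          show {a ∈ range k | a < n} = range (min k n) by ext; simp, card_range]
      have hih : ∀ a : Fin k, (newtonPowerSum n e (k - a) : ZMod 2) = 1 :=
        fun a ↦ ih _ (by omega)
      push_cast [newtonPowerSum, he₂, hih]
      simp only [ZMod.neg_eq_self_mod_two, one_pow, one_mul, mul_one, hsum]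
      rcases lt_or_ge k n with hk | hk
      · rw [if_pos hk, min_eq_left hk.le]
        ring
      · rw [if_neg hk.not_gt, min_eq_right hk, ZMod.natCast_eq_one_iff_odd.2 hn, mul_zero]
        decide

namespace MvPolynomial

variable {σ R : Type*} [Fintype σ] [CommRing R]

theorem sum_pow_succ_eq_eval_esymm (x : σ → R) (k : ℕ) :
    ∑ i, x i ^ (k + 1) = (-1) ^ k * (k + 1) * eval x (esymm σ R (k + 1)) -
      ∑ a : Fin k, (-1) ^ (a + 1 : ℕ) * eval x (esymm σ R (a + 1)) * ∑ i, x i ^ (k - a) := by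
  have h := congrArg (eval x) (psum_eq_mul_esymm_sub_sum σ R (k + 1) k.succ_pos)
  simp only [psum, map_sum, map_pow, eval_X, map_sub, map_mul, map_natCast, map_neg,
    map_one] at h
  rw [h, sum_filter, Nat.sum_antidiagonal_eq_sum_range_succ_mk, sum_range_succ, sum_range_succ']
  simp only [Set.mem_Ioo, lt_self_iff_false, and_false, false_and, if_false, add_zero,
    Nat.succ_pos, add_lt_add_iff_right, true_and, Nat.add_sub_add_right, Nat.cast_add,
    Nat.cast_one, pow_succ, mul_neg_one, neg_neg, neg_mul, Finset.sum_range, Fin.is_lt, if_true]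

theorem cast_newtonPowerSum (x : σ → R) {e : ℕ → ℤ}
    (he : ∀ a, (e a : R) = eval x (esymm σ R a)) (k : ℕ) :
    (newtonPowerSum (Fintype.card σ) e k : R) = ∑ i, x i ^ k := by
  induction k using Nat.strong_induction_on with
  | _ k ih =>
    cases k with
    | zero => simp [newtonPowerSum]
    | succ k =>
      rw [newtonPowerSum, sum_pow_succ_eq_eval_esymm]
      push_cast
      rw [he]
      congr 1
      refine Finset.sum_congr rfl fun a _ ↦ ?_
      rw [he, ih _ (by omega)]

theorem eval_esymm_eq_coeff_prod_X_sub_C (x : σ → R) (a : ℕ) :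
    eval x (esymm σ R a) =
      if a ≤ Fintype.card σ then
        (-1) ^ a * (∏ i, (Polynomial.X - Polynomial.C (x i))).coeff (Fintype.card σ - a)
      else 0 := by
  split_ifs with ha
  · have hx : ∏ i, (Polynomial.X - Polynomial.C (x i)) =
        ((univ.val.map x).map fun t ↦ Polynomial.X - Polynomial.C t).prod := by
      rw [Multiset.map_map]; rfl
    rw [hx, Multiset.prod_X_sub_C_coeff _ (by simp), ← aeval_esymm_eq_multiset_esymm σ R]
    simp [Nat.sub_sub_self ha, ← mul_assoc, ← pow_add, ← two_mul, pow_mul]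
  · have : (univ : Finset σ).powersetCard a = ∅ :=
      powersetCard_eq_empty.2 (by rw [card_univ]; omega)
    simp [esymm, this]

end MvPolynomial

theorem Polynomial.coeff_X_pow_add_sum_C_mul_X_pow {R : Type*} [Semiring R] {n : ℕ}
    (c : Fin n → R) (i : Fin n) :
    (X ^ n + ∑ j : Fin n, C (c j) * X ^ (j : ℕ)).coeff i = c i := by
  simp [coeff_X_pow, i.is_lt.ne, Fin.val_inj]

theorem Matrix.det_of_sum_pow_add {R : Type*} [CommRing R] {n : ℕ} (v : Fin n → R) :
    (of fun i j : Fin n ↦ ∑ k, v k ^ (i + j : ℕ)).det =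
      ∏ i, ∏ j, if i < j then (v i - v j) ^ 2 else 1 := by
  have hV : (vandermonde v)ᵀ * vandermonde v = of fun i j : Fin n ↦ ∑ k, v k ^ (i + j : ℕ) :=
    Matrix.ext (vandermonde_transpose_mul_vandermonde v)
  rw [← hV, det_mul, det_transpose, ← sq, det_vandermonde, ← prod_pow]
  refine prod_congr rfl fun i _ ↦ ?_
  rw [← prod_pow, ← filter_lt_eq_Ioi, prod_filter]
  simp only [← neg_sub (v i), neg_sq]

theorem Matrix.pow_card_sub_one_dvd_det {ι R : Type*} [Fintype ι] [DecidableEq ι] [CommRing R]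
    (M : Matrix ι ι R) {d : R} (k : ι) (h : ∀ i j, d ∣ M i j - M k j) :
    d ^ (Fintype.card ι - 1) ∣ M.det := by
  choose q hq using h
  let N : Matrix ι ι R := of fun i j ↦ if i = k then M k j else q i j
  have hMN : (diagonal (fun i ↦ if i = k then 1 else d) * N).det = M.det := by
    refine det_eq_of_forall_row_eq_smul_add_const (fun i ↦ if i = k then 0 else -1) k
      (if_pos rfl) fun i j ↦ ?_
    by_cases hi : i = k
    · simp [N, hi]
    · simp [N, hi, ← hq, sub_eq_add_neg]
  rw [← hMN, det_mul, det_diagonal, ← mul_prod_erase univ _ (mem_univ k), if_pos rfl, one_mul,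
    prod_congr rfl fun i hi ↦ if_neg (ne_of_mem_erase hi), prod_const,
    card_erase_of_mem (mem_univ k), card_univ]
  exact dvd_mul_right _ _

theorem stmt17_general (n : ℕ) (hodd : Odd n)
    (ε : Fin n → ℤ) (hε : ∀ i, ε i = 1 ∨ ε i = -1)
    (α : Fin n → ℂ)
    (hroots : Polynomial.map (Int.castRingHom ℂ)
        (X ^ n + ∑ i : Fin n, C (ε i) * X ^ (i : ℕ)) = ∏ i : Fin n, (X - C (α i)))
    (D : ℤ)
    (hD : (D : ℂ) = ∏ i : Fin n, ∏ j : Fin n, if i < j then (α i - α j) ^ 2 else 1) :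
    (2 : ℤ) ^ (n - 1) ∣ D := by
  set f : ℤ[X] := X ^ n + ∑ i : Fin n, C (ε i) * X ^ (i : ℕ)
  set e : ℕ → ℤ := fun a ↦ if a ≤ n then (-1) ^ a * f.coeff (n - a) else 0
  have he : ∀ a, (e a : ℂ) = MvPolynomial.eval α (MvPolynomial.esymm (Fin n) ℂ a) := by
    intro a
    rw [MvPolynomial.eval_esymm_eq_coeff_prod_X_sub_C, Fintype.card_fin, ← hroots]
    split_ifs with ha <;> simp [e, ha, coeff_map]
  have he_odd : ∀ a, Odd (e (a + 1)) ↔ a < n := by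
    intro a
    by_cases ha : a < n
    · let i : Fin n := ⟨n - (a + 1), by omega⟩
      have hc : f.coeff (n - (a + 1)) = ε i := coeff_X_pow_add_sum_C_mul_X_pow ε i
      have hε_odd : Odd (ε i) := by rcases hε i with h | h <;> simp [h]
      simpa [e, ha, Nat.succ_le_of_lt ha, hc] using odd_neg_one.pow.mul hε_odd
    · simp [e, ha]
  let M : Matrix (Fin n) (Fin n) ℤ := of fun i j ↦ newtonPowerSum n e (i + j)
  have hDM : D = M.det := by
    apply Int.cast_injective (α := ℂ)
    rw [hD, ← det_of_sum_pow_add, Int.cast_det]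
    congr 1
    ext i j
    simpa [M] using (MvPolynomial.cast_newtonPowerSum α he (i + j)).symm
  have hM_odd : ∀ i j, Odd (M i j) := fun i j ↦ odd_newtonPowerSum hodd he_odd _
  have hrows : ∀ i j, 2 ∣ M i j - M ⟨0, hodd.pos⟩ j :=
    fun i j ↦ ((hM_odd i j).sub_odd (hM_odd _ j)).two_dvd
  simpa [hDM] using M.pow_card_sub_one_dvd_det ⟨0, hodd.pos⟩ hrows

/-- For odd `n ≥ 1` and `f = xⁿ + Σ_{i<n} εᵢ xⁱ` with all `εᵢ ∈ {1, -1}`, the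
discriminant `∏_{i<j}(αᵢ - αⱼ)²` of `f` (over the complex roots `αᵢ`) is divisible by
`2^{n-1}` as an integer. -/
theorem stmt17 (n : ℕ) (hn : 1 ≤ n) (hodd : Odd n)
    (ε : Fin n → ℤ) (hε : ∀ i, ε i = 1 ∨ ε i = -1)
    (α : Fin n → ℂ)
    (hroots : Polynomial.map (Int.castRingHom ℂ)
        (X ^ n + ∑ i : Fin n, C (ε i) * X ^ (i : ℕ)) = ∏ i : Fin n, (X - C (α i)))
    (D : ℤ)
    (hD : (D : ℂ) = ∏ i : Fin n, ∏ j : Fin n, if i < j then (α i - α j) ^ 2 else 1) :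
    (2 : ℤ) ^ (n - 1) ∣ D :=
  stmt17_general n hodd ε hε α hroots D hD
end

section
/- For every even n ≥ 2 and every polynomial f(x) = Σ_{i=0}^{n} εᵢ xⁱ with each εᵢ ∈ {1, −1} and εₙ = 1, the discriminant of f is odd. -/
/-!
The roots `αᵢ` are algebraic integers, so we may reduce modulo a maximal ideal `Q` of the
integral closure of `ℤ` in `ℂ` that contains `2`. Modulo `Q` all signs become `1`, so `f` becomes
`1 + X + ⋯ + Xⁿ`, a factor of `X^(n+1) - 1`; as `n + 1` is odd this is separable in
characteristic `2`. Hence the reduced roots are distinct, the reduced discriminant is nonzero,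
and `D` cannot be even.
-/

open Polynomial

theorem exists_isMaximal_natCast_mem (A : Type*) [CommRing A] [Algebra.IsIntegral ℤ A]
    [CharZero A] (p : ℕ) [Fact p.Prime] : ∃ Q : Ideal A, Q.IsMaximal ∧ (p : A) ∈ Q := by
  obtain ⟨Q, hQ, hlies⟩ :=
    Ideal.exists_maximal_ideal_liesOver_of_isIntegral (S := A) (Ideal.span {(p : ℤ)})
  refine ⟨Q, hQ, ?_⟩
  simpa using (Ideal.mem_of_liesOver Q _ (p : ℤ)).1 (Ideal.mem_span_singleton_self _)

theorem separable_geom_sum {K : Type*} [Field K] {n : ℕ} (hn : ((n + 1 : ℕ) : K) ≠ 0) :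
    (∑ i ∈ Finset.range (n + 1), (X : K[X]) ^ i).Separable := by
  have h := separable_X_pow_sub_C (1 : K) hn one_ne_zero
  rw [C_1, ← geom_sum_mul] at h
  exact h.of_mul_left

theorem monic_sum_C_mul_X_pow {R : Type*} [CommRing R] {n : ℕ} (ε : Fin (n + 1) → R)
    (htop : ε (Fin.last n) = 1) : (∑ i : Fin (n + 1), C (ε i) * X ^ (i : ℕ)).Monic := by
  rw [Fin.sum_univ_castSucc, add_comm, htop, C_1, one_mul, Fin.val_last]
  exact monic_X_pow_add (degree_sum_fin_lt _)

theorem map_sum_C_mul_X_pow_of_two_eq_zero {K : Type*} [CommRing K] (h2 : (2 : K) = 0) {n : ℕ}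
    (ε : Fin (n + 1) → ℤ) (hε : ∀ i, ε i = 1 ∨ ε i = -1) :
    (∑ i : Fin (n + 1), C (ε i) * X ^ (i : ℕ)).map (Int.castRingHom K) =
      ∑ i ∈ Finset.range (n + 1), X ^ i := by
  have hneg : (-1 : K) = 1 := by linear_combination -h2
  rw [Polynomial.map_sum, ← Fin.sum_univ_eq_sum_range]
  refine Finset.sum_congr rfl fun i _ => ?_
  have hεi : (ε i : K) = 1 := by rcases hε i with h | h <;> simp [h, hneg]
  rw [Polynomial.map_mul, map_C, Polynomial.map_pow, map_X, eq_intCast, hεi, C_1, one_mul]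

theorem isIntegral_of_map_eq_prod {R L ι : Type*} [CommRing R] [CommRing L] [Algebra R L]
    [Fintype ι] {f : R[X]} (hf : f.Monic) {α : ι → L}
    (h : f.map (algebraMap R L) = ∏ i, (X - C (α i))) (i : ι) : IsIntegral R (α i) := by
  refine ⟨f, hf, ?_⟩
  rw [eval₂_eq_eval_map, h, eval_prod]
  exact Finset.prod_eq_zero (Finset.mem_univ i) (by simp)

theorem map_integralClosure_eq_prod {R L ι : Type*} [CommRing R] [CommRing L] [Algebra R L]
    [Fintype ι] {f : R[X]} {α : ι → L} (hα : ∀ i, IsIntegral R (α i))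
    (h : f.map (algebraMap R L) = ∏ i, (X - C (α i))) :
    f.map (algebraMap R (integralClosure R L)) = ∏ i, (X - C ⟨α i, hα i⟩) := by
  apply Polynomial.map_injective (algebraMap (integralClosure R L) L) Subtype.coe_injective
  rw [Polynomial.map_map, ← IsScalarTower.algebraMap_eq, h, Polynomial.map_prod]
  simp

def discrOfRoots {R : Type*} [CommRing R] {n : ℕ} (x : Fin n → R) : R :=
  ∏ i, ∏ j, if i < j then (x i - x j) ^ 2 else 1

theorem map_discrOfRoots {R S : Type*} [CommRing R] [CommRing S] (φ : R →+* S) {n : ℕ}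
    (x : Fin n → R) : φ (discrOfRoots x) = discrOfRoots (φ ∘ x) := by
  simp only [discrOfRoots, map_prod, apply_ite φ, map_pow, map_sub, map_one, Function.comp_apply]

theorem discrOfRoots_ne_zero {R : Type*} [CommRing R] [NoZeroDivisors R] [Nontrivial R] {n : ℕ}
    {x : Fin n → R} (hx : Function.Injective x) : discrOfRoots x ≠ 0 := by
  refine Finset.prod_ne_zero_iff.2 fun i _ => Finset.prod_ne_zero_iff.2 fun j _ => ?_
  split_ifs with hij
  · exact pow_ne_zero 2 (sub_ne_zero.2 (hx.ne hij.ne))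
  · exact one_ne_zero

theorem stmt18_general (n : ℕ) (heven : Even n)
    (ε : Fin (n + 1) → ℤ) (hε : ∀ i, ε i = 1 ∨ ε i = -1)
    (htop : ε (Fin.last n) = 1)
    (α : Fin n → ℂ)
    (hroots : Polynomial.map (Int.castRingHom ℂ)
        (∑ i : Fin (n + 1), C (ε i) * X ^ (i : ℕ)) = ∏ i : Fin n, (X - C (α i)))
    (D : ℤ)
    (hD : (D : ℂ) = ∏ i : Fin n, ∏ j : Fin n, if i < j then (α i - α j) ^ 2 else 1) :
    Odd D := by
  set O := integralClosure ℤ ℂ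
  rw [← algebraMap_int_eq] at hroots
  have hα := isIntegral_of_map_eq_prod (monic_sum_C_mul_X_pow ε htop) hroots
  set a : Fin n → O := fun i => ⟨α i, hα i⟩
  have hDO : (D : O) = discrOfRoots a := Subtype.coe_injective <| by
    change algebraMap O ℂ D = algebraMap O ℂ (discrOfRoots a)
    rw [map_intCast, map_discrOfRoots]
    exact hD
  obtain ⟨Q, hQ, h2Q⟩ := exists_isMaximal_natCast_mem O 2
  let _ := Ideal.Quotient.field Q
  set φ := Ideal.Quotient.mk Q
  have h2 : (2 : O ⧸ Q) = 0 := by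
    rw [← map_ofNat φ 2]; exact Ideal.Quotient.eq_zero_iff_mem.2 (by exact_mod_cast h2Q)
  have hfactor : ∏ i, (X - C ((φ ∘ a) i)) = ∑ i ∈ Finset.range (n + 1), X ^ i := by
    have := congrArg (map φ) (map_integralClosure_eq_prod hα hroots)
    rw [Polynomial.map_map, Subsingleton.elim (φ.comp _) (Int.castRingHom _),
      map_sum_C_mul_X_pow_of_two_eq_zero h2 ε hε, Polynomial.map_prod] at this
    simpa [a] using this.symm
  have hsucc_ne_zero : ((n + 1 : ℕ) : O ⧸ Q) ≠ 0 := by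
    obtain ⟨m, rfl⟩ := heven
    simp [← two_mul, h2]
  have hinj : Function.Injective (φ ∘ a) :=
    separable_prod_X_sub_C_iff.1 (hfactor ▸ separable_geom_sum hsucc_ne_zero)
  have hDQ : (D : O ⧸ Q) ≠ 0 := by
    rw [← map_intCast φ, hDO, map_discrOfRoots]
    exact discrOfRoots_ne_zero hinj
  rw [← Int.not_even_iff_odd]
  rintro ⟨k, rfl⟩
  exact hDQ (by push_cast; rw [← two_mul, h2, zero_mul])

/-- For even `n ≥ 2` and `f = Σ_{i=0}^{n} εᵢ xⁱ` with all `εᵢ ∈ {1, -1}` and `εₙ = 1`,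
the discriminant `∏_{i<j}(αᵢ - αⱼ)²` of `f` (over the complex roots `αᵢ`) is odd. -/
theorem stmt18 (n : ℕ) (hn : 2 ≤ n) (heven : Even n)
    (ε : Fin (n + 1) → ℤ) (hε : ∀ i, ε i = 1 ∨ ε i = -1)
    (htop : ε (Fin.last n) = 1)
    (α : Fin n → ℂ)
    (hroots : Polynomial.map (Int.castRingHom ℂ)
        (∑ i : Fin (n + 1), C (ε i) * X ^ (i : ℕ)) = ∏ i : Fin n, (X - C (α i)))
    (D : ℤ)
    (hD : (D : ℂ) = ∏ i : Fin n, ∏ j : Fin n, if i < j then (α i - α j) ^ 2 else 1) :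
    Odd D :=
  stmt18_general n heven ε hε htop α hroots D hD
end

section
/- Let f ∈ ℝ[X] be a monic separable polynomial of degree n with real coefficients and 2r non-real complex roots. Then the sign of the discriminant of f equals (−1)^r. -/
open Polynomial

/-- For a monic separable real polynomial of degree `n` with `2r` non-real complex roots,
the sign of the discriminant `∏_{i<j}(αᵢ - αⱼ)²` equals `(-1)^r`. -/
theorem stmt19 (n r : ℕ) (f : Polynomial ℝ) (hmonic : f.Monic) (hdeg : f.natDegree = n)
    (α : Fin n → ℂ)
    (hroots : Polynomial.map (algebraMap ℝ ℂ) f = ∏ i : Fin n, (X - C (α i)))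
    (hsep : Function.Injective α)
    (hnonreal : Nat.card {i : Fin n // (α i).im ≠ 0} = 2 * r)
    (D : ℝ)
    (hD : (D : ℂ) = ∏ i : Fin n, ∏ j : Fin n, if i < j then (α i - α j) ^ 2 else 1) :
    Real.sign D = (-1) ^ r := by
  classical
  -- conjugates of roots are roots
  have hconjroots : ∀ i, ∃ j, α j = (starRingEnd ℂ) (α i) := by
    intro i
    have hmap : Polynomial.map (starRingEnd ℂ) (Polynomial.map (algebraMap ℝ ℂ) f)
        = Polynomial.map (algebraMap ℝ ℂ) f := by
      rw [Polynomial.map_map]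
      congr 1
      ext x : 1
      simp [Complex.conj_ofReal]
    have h2 : (∏ j : Fin n, (X - C ((starRingEnd ℂ) (α j))))
        = ∏ j : Fin n, (X - C (α j)) := by
      rw [← hroots, ← hmap, hroots, Polynomial.map_prod]
      simp
    have h3 : Polynomial.eval ((starRingEnd ℂ) (α i))
        (∏ j : Fin n, (X - C (α j))) = 0 := by
      rw [← h2, Polynomial.eval_prod]
      apply Finset.prod_eq_zero (Finset.mem_univ i)
      simp
    rw [Polynomial.eval_prod, Finset.prod_eq_zero_iff] at h3
    obtain ⟨j, -, hj⟩ := h3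
    refine ⟨j, ?_⟩
    have := hj
    simp only [eval_sub, eval_X, eval_C, sub_eq_zero] at this
    exact this.symm ▸ rfl
  choose g hg using hconjroots
  have hinv : Function.Involutive g := by
    intro i
    apply hsep
    rw [hg, hg, Complex.conj_conj]
  set σ : Equiv.Perm (Fin n) := hinv.toPerm g with hσdef
  have hσ : ∀ i, σ i = g i := fun i => rfl
  -- the support of σ is the set of non-real roots
  have hsupp : σ.support = Finset.univ.filter (fun i => (α i).im ≠ 0) := by
    ext i
    simp only [Equiv.Perm.mem_support, Finset.mem_filter, Finset.mem_univ, true_and, hσ]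
    constructor
    · intro h hcontra
      apply h
      apply hsep
      rw [hg, Complex.conj_eq_iff_im.mpr hcontra]
    · intro h hcontra
      apply h
      have : α (g i) = α i := by rw [hcontra]
      rw [hg] at this
      exact (Complex.conj_eq_iff_im.mp this)
  have hsuppcard : σ.support.card = 2 * r := by
    rw [hsupp, ← hnonreal, Nat.card_eq_fintype_card, Fintype.card_subtype]
  -- σ is an involution, so its sign is (-1)^r
  have hσ2 : σ ^ 2 = 1 := by
    ext i
    simp [pow_two, hσ, hinv i]
  have hcyc2 : ∀ m ∈ σ.cycleType, m = 2 := by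
    intro m hm
    have h1 : 2 ≤ m := Equiv.Perm.two_le_of_mem_cycleType hm
    have h2 : m ∣ 2 := (Equiv.Perm.dvd_of_mem_cycleType hm).trans
      (orderOf_dvd_of_pow_eq_one hσ2)
    have h3 := Nat.le_of_dvd two_pos h2
    omega
  have hcycrep : σ.cycleType = Multiset.replicate (Multiset.card σ.cycleType) 2 :=
    Multiset.eq_replicate_card.mpr hcyc2
  have hcardcyc : Multiset.card σ.cycleType = r := by
    have hsum : σ.cycleType.sum = 2 * r := by rw [Equiv.Perm.sum_cycleType, hsuppcard]
    rw [hcycrep, Multiset.sum_replicate, smul_eq_mul] at hsum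
    omega
  have hsign : Equiv.Perm.sign σ = (-1 : ℤˣ) ^ r := by
    rw [Equiv.Perm.sign_of_cycleType, Equiv.Perm.sum_cycleType, hsuppcard, hcardcyc]
    rw [pow_add, pow_mul]
    norm_num
  -- Vandermonde determinant
  set Q : ℂ := (Matrix.vandermonde α).det with hQdef
  have hQne : Q ≠ 0 := Matrix.det_vandermonde_ne_zero_iff.mpr hsep
  have hDQ : (D : ℂ) = Q ^ 2 := by
    rw [hD, hQdef, Matrix.det_vandermonde, ← Finset.prod_pow]
    apply Finset.prod_congr rfl
    intro i _
    rw [← Finset.prod_pow, ← Finset.filter_lt_eq_Ioi, Finset.prod_filter]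
    apply Finset.prod_congr rfl
    intro j _
    split <;> ring
  have hconjQ : (starRingEnd ℂ) Q = ((Equiv.Perm.sign σ : ℤ) : ℂ) * Q := by
    have h1 : (starRingEnd ℂ) Q = ((Matrix.vandermonde α).map (starRingEnd ℂ)).det :=
      RingHom.map_det (starRingEnd ℂ) _
    have h2 : (Matrix.vandermonde α).map (starRingEnd ℂ)
        = (Matrix.vandermonde α).submatrix σ id := by
      ext i j
      simp only [Matrix.map_apply, Matrix.vandermonde_apply, Matrix.submatrix_apply, id,
        map_pow, hσ, hg]
    rw [h1, h2, Matrix.det_permute]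
  have hsignC : ((Equiv.Perm.sign σ : ℤ) : ℂ) = (-1) ^ r := by
    rw [hsign]; push_cast; ring
  rw [hsignC] at hconjQ
  -- D = (-1)^r * |Q|^2
  have hε : ((-1 : ℂ)) ^ r * (-1) ^ r = 1 := by
    rw [← pow_add, ← two_mul, pow_mul]; norm_num
  have hkey : (D : ℂ) = (-1) ^ r * (Complex.normSq Q : ℂ) := by
    have h4 : (Complex.normSq Q : ℂ) = (-1) ^ r * (D : ℂ) := by
      rw [hDQ, ← Complex.mul_conj Q, hconjQ]; ring
    rw [h4, ← mul_assoc, hε, one_mul]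
  have hkeyR : D = (-1) ^ r * Complex.normSq Q := by
    have : ((((-1 : ℝ)) ^ r * Complex.normSq Q : ℝ) : ℂ)
        = (-1) ^ r * (Complex.normSq Q : ℂ) := by push_cast; ring
    exact_mod_cast hkey.trans this.symm
  have hpos : 0 < Complex.normSq Q := Complex.normSq_pos.mpr hQne
  rcases Nat.even_or_odd r with he | ho
  · rw [hkeyR, he.neg_one_pow, one_mul, Real.sign_of_pos hpos]
  · rw [hkeyR, ho.neg_one_pow, neg_one_mul, Real.sign_of_neg (by linarith)]
end
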